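/- arXiv:1506.04573 — 5 statements merged into one kernel-verified Lean document; each statement's English description precedes it below -/
import Mathlib

section
/- Let P_S and P_T be two domains (probability measures) on X × Y with Y = {−1,1}, and let D_T denote the marginal of P_T on X. Let A ⊆ X × Y be a measurable set with P_S(Aᶜ) = 0 such that the restriction of P_T to A is absolutely continuous with respect to P_S with density ρ. For q > 1, define β_q = (∫ ρ(x,y)^q dP_S(x,y))^{1/q}, and define η_{T∖S} = P_T(Aᶜ) · sup_{h∈H} R_{T∖S}(h), where T∖S is the conditional distribution of P_T given Aᶜ (η_{T∖S} := 0 when P_T(Aᶜ) = 0) and R_{T∖S}(h) = E_{(x,y)∼T∖S} 1[h(x) ≠ y]. Then for every posterior distribution Q on H: R_{P_T}(G_Q) ≤ (1/2)·d_{D_T}(Q) + β_q · (e_{P_S}(Q))^{1−1/q} + η_{T∖S}. -/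
/-!
Pointwise in `z = (x, y)` the votes `h x`, `h' x` of two independent draws from `Q` are i.i.d.
Booleans, so with `r` the probability of a wrong vote, the disagreement at `x` is `2 r (1 - r)`
and the joint error at `z` is `r ^ 2`; hence `r = d / 2 + e` pointwise, and after integrating
against `P_T`, `R_T(G_Q) = d_T / 2 + e_T`. Split `e_T` along `A`. On `A`, `P_T = ρ • P_S`, and
Hölder with exponents `q` and `q'` together with `e ≤ 1` (so `e ^ q' ≤ e`) bounds that part by
`β_q e_S ^ (1 / q')`. On `Aᶜ`, `e ≤ r`, and the Gibbs risk under `P_T[|Aᶜ]` is the `Q`-average of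
the individual risks, hence at most their supremum.
-/

open MeasureTheory ProbabilityTheory Real
open scoped ENNReal

noncomputable section

section UnitInterval

variable {α : Type*} [MeasurableSpace α] {μ : Measure α} {f : α → ℝ}

lemma integral_mem_Icc_of_mem_Icc_zero_one [IsFiniteMeasure μ]
    (hf : ∀ x, f x ∈ Set.Icc (0 : ℝ) 1) : ∫ x, f x ∂μ ∈ Set.Icc 0 (μ.real Set.univ) := by
  have hnorm : ∀ x, ‖f x‖ ≤ 1 := fun x => by rw [norm_of_nonneg (hf x).1]; exact (hf x).2
  refine ⟨integral_nonneg fun x => (hf x).1, (le_norm_self _).trans ?_⟩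
  exact (norm_integral_le_of_norm_le_const (ae_of_all _ hnorm)).trans_eq (one_mul _)

lemma integral_mem_Icc_zero_one [IsProbabilityMeasure μ] (hf : ∀ x, f x ∈ Set.Icc (0 : ℝ) 1) :
    ∫ x, f x ∂μ ∈ Set.Icc (0 : ℝ) 1 := by
  simpa using integral_mem_Icc_of_mem_Icc_zero_one (μ := μ) hf

lemma integrable_of_mem_Icc_zero_one [IsFiniteMeasure μ] (hm : AEStronglyMeasurable f μ)
    (hf : ∀ x, f x ∈ Set.Icc (0 : ℝ) 1) : Integrable f μ :=
  .of_bound hm 1 <| ae_of_all _ fun x => by rw [norm_of_nonneg (hf x).1]; exact (hf x).2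

end UnitInterval

section Measurability

variable {α β γ : Type*} [MeasurableSpace α] [MeasurableSpace β] [MeasurableSpace γ]

lemma measurable_ite_ne {a b : α → β} [DecidableEq β] [MeasurableEq β] (ha : Measurable a)
    (hb : Measurable b) :
    Measurable fun x => if a x ≠ b x then (1 : ℝ) else 0 :=
  Measurable.ite (measurableSet_eq_fun ha hb).compl measurable_const measurable_const

lemma measurable_ite_ne_and_ne {a b c : α → β} [DecidableEq β] [MeasurableEq β] (ha : Measurable a)
    (hb : Measurable b) (hc : Measurable c) :
    Measurable fun x => if a x ≠ c x ∧ b x ≠ c x then (1 : ℝ) else 0 :=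
  Measurable.ite ((measurableSet_eq_fun ha hc).compl.inter (measurableSet_eq_fun hb hc).compl)
    measurable_const measurable_const

lemma stronglyMeasurable_integral_integral {ν : Measure β} {κ : Measure γ} [SFinite ν] [SFinite κ]
    {F : α → β → γ → ℝ} (hF : Measurable fun p : (α × β) × γ => F p.1.1 p.1.2 p.2) :
    StronglyMeasurable fun a => ∫ b, ∫ c, F a b c ∂κ ∂ν :=
  (hF.stronglyMeasurable.integral_prod_right' (ν := κ)).integral_prod_right'

end Measurability

lemma integral_ne_eq_half_integral_ne_add_integral_and (ν : Measure Bool) [IsProbabilityMeasure ν]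
    (y : Bool) :
    ∫ b, (if b ≠ y then (1 : ℝ) else 0) ∂ν
      = 1 / 2 * ∫ b, ∫ b', (if b ≠ b' then (1 : ℝ) else 0) ∂ν ∂ν
        + ∫ b, ∫ b', (if b ≠ y ∧ b' ≠ y then (1 : ℝ) else 0) ∂ν ∂ν := by
  have hfalse : ν.real {false} = 1 - ν.real {true} := by
    rw [← probReal_compl_eq_one_sub (measurableSet_singleton _)]
    congr
    ext b
    simp
  simp only [integral_fintype Integrable.of_finite, Fintype.sum_bool, smul_eq_mul]
  cases y <;> simp [hfalse] <;> ring

lemma setIntegral_eq_measureReal_mul_integral_cond {α : Type*} [MeasurableSpace α] (μ : Measure α)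
    [IsFiniteMeasure μ] (s : Set α) (f : α → ℝ) :
    ∫ x in s, f x ∂μ = μ.real s * ∫ x, f x ∂μ[|s] := by
  rcases eq_or_ne (μ s) 0 with hs | hs
  · simp [Measure.restrict_eq_zero.2 hs, measureReal_def, hs]
  · rw [ProbabilityTheory.cond, integral_smul_measure, smul_eq_mul, ← mul_assoc, ENNReal.toReal_inv,
      measureReal_def, mul_inv_cancel₀ (ENNReal.toReal_ne_zero.2 ⟨hs, measure_ne_top μ s⟩), one_mul]

lemma integral_integral_le_iSup_integral {α Ω : Type*} [MeasurableSpace α] [MeasurableSpace Ω]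
    (μ : Measure α) [IsFiniteMeasure μ] (Q : Measure Ω) [IsProbabilityMeasure Q]
    {F : α → Ω → ℝ} (hF : Measurable (Function.uncurry F))
    (hF01 : ∀ a h, F a h ∈ Set.Icc (0 : ℝ) 1) :
    ∫ a, ∫ h, F a h ∂Q ∂μ ≤ ⨆ h, ∫ a, F a h ∂μ := by
  have hbound : ∀ h, ∫ a, F a h ∂μ ∈ Set.Icc 0 (μ.real Set.univ) := fun h =>
    integral_mem_Icc_of_mem_Icc_zero_one fun a => hF01 a h
  have hintegrable : Integrable (fun h => ∫ a, F a h ∂μ) Q :=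
    .of_bound hF.stronglyMeasurable.integral_prod_left'.aestronglyMeasurable (μ.real Set.univ)
      (ae_of_all _ fun h => by rw [norm_of_nonneg (hbound h).1]; exact (hbound h).2)
  rw [integral_integral_swap (integrable_of_mem_Icc_zero_one hF.aestronglyMeasurable
    fun p => hF01 p.1 p.2)]
  calc ∫ h, ∫ a, F a h ∂μ ∂Q ≤ ∫ _h, ⨆ h, ∫ a, F a h ∂μ ∂Q :=
        integral_mono hintegrable (integrable_const _) fun h =>
          le_ciSup ⟨_, Set.forall_mem_range.2 fun h => (hbound h).2⟩ h
    _ = ⨆ h, ∫ a, F a h ∂μ := by simp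

lemma ofReal_integral_le_of_eq_withDensity {α : Type*} [MeasurableSpace α] {μ ν : Measure α}
    [IsFiniteMeasure μ] [IsFiniteMeasure ν] {ρ : α → ℝ≥0∞} (hν : ν = μ.withDensity ρ)
    (hρ : Measurable ρ) {f : α → ℝ} (hf : Measurable f) (hf01 : ∀ x, f x ∈ Set.Icc (0 : ℝ) 1)
    {q : ℝ} (hq : 1 < q) :
    ENNReal.ofReal (∫ x, f x ∂ν)
      ≤ (∫⁻ x, ρ x ^ q ∂μ) ^ (1 / q) * ENNReal.ofReal ((∫ x, f x ∂μ) ^ (1 - 1 / q)) := by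
  set g : α → ℝ≥0∞ := fun x => ENNReal.ofReal (f x)
  have hg : Measurable g := ENNReal.measurable_ofReal.comp hf
  have hpq : q.HolderConjugate q.conjExponent := .conjExponent hq
  have hp_inv : 1 / q.conjExponent = 1 - 1 / q := by
    rw [eq_sub_iff_add_eq, add_comm]; simpa only [one_div] using hpq.inv_add_inv_eq_one
  have hp_nonneg : 0 ≤ 1 / q.conjExponent := one_div_nonneg.2 hpq.symm.nonneg
  have hg_pow : ∀ x, g x ^ q.conjExponent ≤ g x := fun x =>
    (ENNReal.rpow_le_rpow_of_exponent_ge (ENNReal.ofReal_le_one.2 (hf01 x).2)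
      hpq.symm.lt.le).trans_eq (ENNReal.rpow_one _)
  have hofReal : ∀ {m : Measure α} [IsFiniteMeasure m],
      ENNReal.ofReal (∫ x, f x ∂m) = ∫⁻ x, g x ∂m := fun {m} _ =>
    ofReal_integral_eq_lintegral_ofReal
      (integrable_of_mem_Icc_zero_one hf.aestronglyMeasurable hf01)
      (ae_of_all _ fun x => (hf01 x).1)
  calc ENNReal.ofReal (∫ x, f x ∂ν) = ∫⁻ x, ρ x * g x ∂μ := by
        rw [hofReal, hν, lintegral_withDensity_eq_lintegral_mul μ hρ hg]; rfl
    _ ≤ (∫⁻ x, ρ x ^ q ∂μ) ^ (1 / q) * (∫⁻ x, g x ^ q.conjExponent ∂μ) ^ (1 / q.conjExponent) :=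
        ENNReal.lintegral_mul_le_Lp_mul_Lq μ hpq hρ.aemeasurable hg.aemeasurable
    _ ≤ (∫⁻ x, ρ x ^ q ∂μ) ^ (1 / q) * (∫⁻ x, g x ∂μ) ^ (1 / q.conjExponent) := by
        gcongr
        exact hg_pow _
    _ = (∫⁻ x, ρ x ^ q ∂μ) ^ (1 / q) * ENNReal.ofReal ((∫ x, f x ∂μ) ^ (1 - 1 / q)) := by
        rw [← hofReal, ENNReal.ofReal_rpow_of_nonneg (integral_nonneg fun x => (hf01 x).1)
          hp_nonneg, hp_inv]

section Gibbs

variable {X Ω : Type*} [MeasurableSpace Ω] (ev : Ω → X → Bool) (Q : Measure Ω)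

def gibbsLoss (z : X × Bool) : ℝ := ∫ h, (if ev h z.1 ≠ z.2 then (1 : ℝ) else 0) ∂Q

def disagreement (x : X) : ℝ := ∫ h, ∫ h', (if ev h x ≠ ev h' x then (1 : ℝ) else 0) ∂Q ∂Q

def jointError (z : X × Bool) : ℝ :=
  ∫ h, ∫ h', (if ev h z.1 ≠ z.2 ∧ ev h' z.1 ≠ z.2 then (1 : ℝ) else 0) ∂Q ∂Q

section Measurability

variable [MeasurableSpace X] [SFinite Q] {ev}

lemma measurable_ite_eval_ne (hev : Measurable (Function.uncurry ev)) :
    Measurable fun p : (X × Bool) × Ω => if ev p.2 p.1.1 ≠ p.1.2 then (1 : ℝ) else 0 :=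
  measurable_ite_ne (by fun_prop) (by fun_prop)

lemma measurable_gibbsLoss (hev : Measurable (Function.uncurry ev)) :
    Measurable (gibbsLoss ev Q) :=
  (measurable_ite_eval_ne hev).stronglyMeasurable.integral_prod_right'.measurable

lemma measurable_disagreement (hev : Measurable (Function.uncurry ev)) :
    Measurable (disagreement ev Q) := by
  have : Measurable fun p : (X × Ω) × Ω => if ev p.1.2 p.1.1 ≠ ev p.2 p.1.1 then (1 : ℝ) else 0 :=
    measurable_ite_ne (by fun_prop) (by fun_prop)
  exact (stronglyMeasurable_integral_integral this).measurable

lemma measurable_jointError (hev : Measurable (Function.uncurry ev)) :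
    Measurable (jointError ev Q) := by
  have : Measurable fun p : ((X × Bool) × Ω) × Ω =>
      if ev p.1.2 p.1.1.1 ≠ p.1.1.2 ∧ ev p.2 p.1.1.1 ≠ p.1.1.2 then (1 : ℝ) else 0 :=
    measurable_ite_ne_and_ne (by fun_prop) (by fun_prop) (by fun_prop)
  exact (stronglyMeasurable_integral_integral this).measurable

end Measurability

variable [IsProbabilityMeasure Q]

lemma gibbsLoss_mem_Icc (z : X × Bool) : gibbsLoss ev Q z ∈ Set.Icc (0 : ℝ) 1 :=
  integral_mem_Icc_zero_one fun h => by split_ifs <;> simp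

lemma disagreement_mem_Icc (x : X) : disagreement ev Q x ∈ Set.Icc (0 : ℝ) 1 :=
  integral_mem_Icc_zero_one fun h => integral_mem_Icc_zero_one fun h' => by split_ifs <;> simp

lemma jointError_mem_Icc (z : X × Bool) : jointError ev Q z ∈ Set.Icc (0 : ℝ) 1 :=
  integral_mem_Icc_zero_one fun h => integral_mem_Icc_zero_one fun h' => by split_ifs <;> simp

variable {ev}

lemma gibbsLoss_eq (hev : ∀ x, Measurable fun h => ev h x) (z : X × Bool) :
    gibbsLoss ev Q z = 1 / 2 * disagreement ev Q z.1 + jointError ev Q z := by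
  have := Measure.isProbabilityMeasure_map (μ := Q) (hev z.1).aemeasurable
  have key := integral_ne_eq_half_integral_ne_add_integral_and (Q.map fun h => ev h z.1) z.2
  simp only [integral_map (hev z.1).aemeasurable Measurable.of_discrete.aestronglyMeasurable] at key
  exact key

lemma jointError_le_gibbsLoss (hev : ∀ x, Measurable fun h => ev h x) (z : X × Bool) :
    jointError ev Q z ≤ gibbsLoss ev Q z := by
  rw [gibbsLoss_eq Q hev]
  linarith [(disagreement_mem_Icc ev Q z.1).1]

variable [MeasurableSpace X]

lemma integral_gibbsLoss_eq (hev : Measurable (Function.uncurry ev)) (P : Measure (X × Bool))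
    [IsFiniteMeasure P] :
    ∫ z, gibbsLoss ev Q z ∂P
      = 1 / 2 * ∫ x, disagreement ev Q x ∂P.map Prod.fst + ∫ z, jointError ev Q z ∂P := by
  have hdis := measurable_disagreement Q hev
  have hjoint := measurable_jointError Q hev
  rw [integral_map measurable_fst.aemeasurable hdis.aestronglyMeasurable, ← integral_const_mul,
    ← integral_add]
  · exact integral_congr_ae <| ae_of_all _ <|
      gibbsLoss_eq Q fun x => hev.comp measurable_prodMk_right
  · exact (integrable_of_mem_Icc_zero_one (hdis.comp measurable_fst).aestronglyMeasurable
      fun z => disagreement_mem_Icc ev Q z.1).const_mul _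
  · exact integrable_of_mem_Icc_zero_one hjoint.aestronglyMeasurable (jointError_mem_Icc ev Q)

lemma setIntegral_jointError_le (hev : Measurable (Function.uncurry ev)) (P : Measure (X × Bool))
    [IsFiniteMeasure P] (s : Set (X × Bool)) :
    ∫ z in s, jointError ev Q z ∂P
      ≤ P.real s * ⨆ h, ∫ z, (if ev h z.1 ≠ z.2 then (1 : ℝ) else 0) ∂P[|s] :=
  calc ∫ z in s, jointError ev Q z ∂P ≤ ∫ z in s, gibbsLoss ev Q z ∂P :=
        integral_mono
          (integrable_of_mem_Icc_zero_one (measurable_jointError Q hev).aestronglyMeasurable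
            (jointError_mem_Icc ev Q))
          (integrable_of_mem_Icc_zero_one (measurable_gibbsLoss Q hev).aestronglyMeasurable
            (gibbsLoss_mem_Icc ev Q))
          (jointError_le_gibbsLoss Q fun x => hev.comp measurable_prodMk_right)
    _ = P.real s * ∫ z, gibbsLoss ev Q z ∂P[|s] :=
        setIntegral_eq_measureReal_mul_integral_cond P s _
    _ ≤ P.real s * ⨆ h, ∫ z, (if ev h z.1 ≠ z.2 then (1 : ℝ) else 0) ∂P[|s] := by
        gcongr
        exact integral_integral_le_iSup_integral _ Q (measurable_ite_eval_ne hev)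
          fun z h => by split_ifs <;> simp

end Gibbs

theorem domain_adaptation_bound_q_general
    {X : Type*} [MeasurableSpace X] {Ω : Type*} [MeasurableSpace Ω]
    (ev : Ω → X → Bool) (hev : Measurable (Function.uncurry ev))
    (PS PT : Measure (X × Bool)) [IsProbabilityMeasure PS] [IsProbabilityMeasure PT]
    -- A is a P_S-full measurable set on which P_T has density ρ w.r.t. P_S
    (A : Set (X × Bool)) (hA : MeasurableSet A)
    (ρ : X × Bool → ℝ≥0∞) (hρ : Measurable ρ)
    (hdens : PT.restrict A = PS.withDensity ρ)
    (q : ℝ) (hq : 1 < q)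
    (Q : Measure Ω) [IsProbabilityMeasure Q] :
    -- R_{P_T}(G_Q) ≤ (1/2) d_{D_T}(Q) + β_q · (e_{P_S}(Q))^{1-1/q} + η_{T∖S}
    ENNReal.ofReal (∫ z, ∫ h, (if ev h z.1 ≠ z.2 then (1 : ℝ) else 0) ∂Q ∂PT)
      ≤ ENNReal.ofReal ((1 / 2) * ∫ x, ∫ h, ∫ h',
            (if ev h x ≠ ev h' x then (1 : ℝ) else 0) ∂Q ∂Q ∂(PT.map Prod.fst))
        + (∫⁻ z, ρ z ^ q ∂PS) ^ (1 / q)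
            * ENNReal.ofReal ((∫ z, ∫ h, ∫ h',
                (if ev h z.1 ≠ z.2 ∧ ev h' z.1 ≠ z.2 then (1 : ℝ) else 0) ∂Q ∂Q ∂PS)
              ^ (1 - 1 / q))
        + ENNReal.ofReal ((PT Aᶜ).toReal *
            ⨆ h : Ω, ∫ z, (if ev h z.1 ≠ z.2 then (1 : ℝ) else 0) ∂(PT[|Aᶜ])) := by
  have hjoint := measurable_jointError Q hev
  have hjoint01 := jointError_mem_Icc ev Q
  have hsplit := integral_gibbsLoss_eq Q hev PT
  rw [← integral_add_compl hA (integrable_of_mem_Icc_zero_one hjoint.aestronglyMeasurable hjoint01)]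
    at hsplit
  calc ENNReal.ofReal (∫ z, gibbsLoss ev Q z ∂PT)
      = ENNReal.ofReal (1 / 2 * ∫ x, disagreement ev Q x ∂PT.map Prod.fst)
        + ENNReal.ofReal (∫ z in A, jointError ev Q z ∂PT)
        + ENNReal.ofReal (∫ z in Aᶜ, jointError ev Q z ∂PT) := by
        have hdis : 0 ≤ 1 / 2 * ∫ x, disagreement ev Q x ∂PT.map Prod.fst :=
          mul_nonneg (by norm_num) (integral_nonneg fun x => (disagreement_mem_Icc ev Q x).1)
        have hjoint_on : ∀ s, 0 ≤ ∫ z in s, jointError ev Q z ∂PT := fun s =>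
          integral_nonneg fun z => (hjoint01 z).1
        rw [hsplit, ENNReal.ofReal_add hdis (add_nonneg (hjoint_on A) (hjoint_on Aᶜ)),
          ENNReal.ofReal_add (hjoint_on A) (hjoint_on Aᶜ), add_assoc]
    _ ≤ ENNReal.ofReal (1 / 2 * ∫ x, disagreement ev Q x ∂PT.map Prod.fst)
        + (∫⁻ z, ρ z ^ q ∂PS) ^ (1 / q)
          * ENNReal.ofReal ((∫ z, jointError ev Q z ∂PS) ^ (1 - 1 / q))
        + ENNReal.ofReal (PT.real Aᶜ
          * ⨆ h, ∫ z, (if ev h z.1 ≠ z.2 then (1 : ℝ) else 0) ∂PT[|Aᶜ]) := by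
        gcongr
        · exact ofReal_integral_le_of_eq_withDensity hdens hρ hjoint hjoint01 hq
        · exact setIntegral_jointError_le Q hev PT Aᶜ

theorem domain_adaptation_bound_q
    {X : Type*} [MeasurableSpace X] {Ω : Type*} [MeasurableSpace Ω]
    (ev : Ω → X → Bool) (hev : Measurable (Function.uncurry ev))
    (PS PT : Measure (X × Bool)) [IsProbabilityMeasure PS] [IsProbabilityMeasure PT]
    -- A is a P_S-full measurable set on which P_T has density ρ w.r.t. P_S
    (A : Set (X × Bool)) (hA : MeasurableSet A) (hSA : PS Aᶜ = 0)
    (ρ : X × Bool → ℝ≥0∞) (hρ : Measurable ρ)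
    (hdens : PT.restrict A = PS.withDensity ρ)
    (q : ℝ) (hq : 1 < q)
    (Q : Measure Ω) [IsProbabilityMeasure Q] :
    -- R_{P_T}(G_Q) ≤ (1/2) d_{D_T}(Q) + β_q · (e_{P_S}(Q))^{1-1/q} + η_{T∖S}
    ENNReal.ofReal (∫ z, ∫ h, (if ev h z.1 ≠ z.2 then (1 : ℝ) else 0) ∂Q ∂PT)
      ≤ ENNReal.ofReal ((1 / 2) * ∫ x, ∫ h, ∫ h',
            (if ev h x ≠ ev h' x then (1 : ℝ) else 0) ∂Q ∂Q ∂(PT.map Prod.fst))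
        + (∫⁻ z, ρ z ^ q ∂PS) ^ (1 / q)
            * ENNReal.ofReal ((∫ z, ∫ h, ∫ h',
                (if ev h z.1 ≠ z.2 ∧ ev h' z.1 ≠ z.2 then (1 : ℝ) else 0) ∂Q ∂Q ∂PS)
              ^ (1 - 1 / q))
        + ENNReal.ofReal ((PT Aᶜ).toReal *
            ⨆ h : Ω, ∫ z, (if ev h z.1 ≠ z.2 then (1 : ℝ) else 0) ∂(PT[|Aᶜ])) :=
  domain_adaptation_bound_q_general ev hev PS PT A hA ρ hρ hdens q hq Q
end
end

section
/- Let P be a probability measure on X × Y, let H be a set of voters with a prior probability measure π on H, let ℓ : H × X × Y → [0,1] be a jointly measurable loss function, let c > 0 and δ ∈ (0,1]. Then with probability at least 1 − δ over the draw of an i.i.d. sample S = ((x_1,y_1),…,(x_m,y_m)) ∼ P^m, simultaneously for all probability measures Q on H: E_{(x,y)∼P} E_{h∼Q} ℓ(h,x,y) ≤ (c/(1−e^{−c})) · [ (1/m) Σ_{i=1}^m E_{h∼Q} ℓ(h,x_i,y_i) + (KL(Q‖π) + ln(1/δ)) / (m·c) ]. -/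
open MeasureTheory ProbabilityTheory Real
open scoped ENNReal Classical

noncomputable section

/-!
For a fixed voter `h`, the losses `ℓ(h, zᵢ)` of an i.i.d. sample lie in `[0, 1]`, so by convexity
of `exp` the exponential moment of `-c ℓ(h, z)` is at most `exp (-(1 - e^{-c}) R(h))`, where `R(h)`
is the risk. Hence Catoni's exponent `m (1 - e^{-c}) R(h) - c ∑ᵢ ℓ(h, zᵢ)` has exponential moment
at most one under `P^m`; by Tonelli so does its `pr`-average, and by Markov's inequality that
average is `< 1/δ` with probability at least `1 - δ`. On this event the Donsker–Varadhan change of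
measure `E_Q F ≤ KL(Q‖pr) + log E_pr e^F`, which holds for all posteriors `Q` at once, gives
`m (1 - e^{-c}) R(Q) - c ∑ᵢ E_Q ℓ(·, zᵢ) < KL(Q‖pr) + log (1/δ)`, and this rearranges to the bound.
-/

/-- Kullback–Leibler divergence, `∞` in the degenerate cases. -/
def klDivergence {Ω : Type*} [MeasurableSpace Ω] (Q pr : Measure Ω) : ℝ≥0∞ :=
  if Q ≪ pr ∧ Integrable (llr Q pr) Q then ENNReal.ofReal (∫ h, llr Q pr h ∂Q) else ∞

theorem integral_le_integral_llr_add_log_integral_exp {Ω : Type*} [MeasurableSpace Ω]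
    {μ ν : Measure Ω} [IsProbabilityMeasure μ] [IsProbabilityMeasure ν] {f : Ω → ℝ}
    (hμν : μ ≪ ν) (h_int : Integrable (llr μ ν) μ) (hfμ : Integrable f μ)
    (hfν : Integrable (fun x ↦ exp (f x)) ν) :
    ∫ x, f x ∂μ ≤ ∫ x, llr μ ν x ∂μ + log (∫ x, exp (f x) ∂ν) := by
  have : IsProbabilityMeasure (ν.tilted f) := isProbabilityMeasure_tilted hfν
  -- Gibbs' inequality for `μ` against the Gibbs measure `ν.tilted f`
  have gibbs := InformationTheory.integral_llr_add_sub_measure_univ_nonneg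
    (hμν.trans (absolutelyContinuous_tilted hfν)) (integrable_llr_tilted_right hμν hfμ h_int hfν)
  rw [integral_llr_tilted_right hμν hfμ hfν h_int] at gibbs
  simp only [probReal_univ] at gibbs
  linarith

theorem ofReal_one_sub_le_measure_lt_of_lintegral_le_one {S : Type*} [MeasurableSpace S]
    (μ : Measure S) [IsProbabilityMeasure μ] {g : S → ℝ≥0∞} (hg : Measurable g)
    (hg_mean : ∫⁻ s, g s ∂μ ≤ 1) {δ : ℝ} (hδ : 0 < δ) :
    ENNReal.ofReal (1 - δ) ≤ μ {s | g s < ENNReal.ofReal (1 / δ)} := by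
  have markov : μ {s | ENNReal.ofReal (1 / δ) ≤ g s} ≤ ENNReal.ofReal δ := by
    calc μ {s | ENNReal.ofReal (1 / δ) ≤ g s}
        ≤ (∫⁻ s, g s ∂μ) / ENNReal.ofReal (1 / δ) :=
          meas_ge_le_lintegral_div hg.aemeasurable (by simpa using hδ) ENNReal.ofReal_ne_top
      _ ≤ 1 / ENNReal.ofReal (1 / δ) := by gcongr
      _ = ENNReal.ofReal δ := by rw [one_div, one_div, ENNReal.ofReal_inv_of_pos hδ, inv_inv]
  simp_rw [← not_le]
  rw [← Set.compl_ofPred, prob_compl_eq_one_sub (measurableSet_le measurable_const hg),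
    ENNReal.ofReal_sub _ hδ.le, ENNReal.ofReal_one]
  gcongr

theorem pacBayes_change_of_measure {Ω S : Type*} [MeasurableSpace Ω] [MeasurableSpace S]
    (μ : Measure S) [IsProbabilityMeasure μ] (ν : Measure Ω) [IsProbabilityMeasure ν]
    {F : Ω → S → ℝ} (hF : Measurable (Function.uncurry F))
    (hF_exp : ∀ h, ∫⁻ s, ENNReal.ofReal (exp (F h s)) ∂μ ≤ 1) {δ : ℝ} (hδ : 0 < δ) :
    ENNReal.ofReal (1 - δ) ≤ μ {s | ∀ Q : Measure Ω, IsProbabilityMeasure Q → Q ≪ ν →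
      Integrable (llr Q ν) Q → Integrable (fun h ↦ F h s) Q →
      ∫ h, F h s ∂Q < ∫ h, llr Q ν h ∂Q + log (1 / δ)} := by
  set expMoment : S → ℝ≥0∞ := fun s ↦ ∫⁻ h, ENNReal.ofReal (exp (F h s)) ∂ν
  have hexp : Measurable fun p : S × Ω ↦ ENNReal.ofReal (exp (F p.2 p.1)) :=
    (hF.comp measurable_swap).exp.ennreal_ofReal
  have hmeas : Measurable expMoment := hexp.lintegral_prod_right'
  have hmean_le_one : ∫⁻ s, expMoment s ∂μ ≤ 1 := by
    calc ∫⁻ s, expMoment s ∂μ = ∫⁻ h, ∫⁻ s, ENNReal.ofReal (exp (F h s)) ∂μ ∂ν :=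
          lintegral_lintegral_swap hexp.aemeasurable
      _ ≤ ∫⁻ _, 1 ∂ν := lintegral_mono hF_exp
      _ = 1 := by simp
  refine (ofReal_one_sub_le_measure_lt_of_lintegral_le_one μ hmeas hmean_le_one hδ).trans
    (measure_mono fun s hs Q _ hQν hllr hFQ ↦ ?_)
  rw [Set.mem_ofPred_eq] at hs
  have hFν : Integrable (fun h ↦ exp (F h s)) ν :=
    ⟨(hF.comp measurable_prodMk_right).exp.aestronglyMeasurable, by
      simpa [HasFiniteIntegral, Real.enorm_eq_ofReal (exp_nonneg _)] using
        hs.trans ENNReal.ofReal_lt_top⟩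
  have hmean : ∫ h, exp (F h s) ∂ν < 1 / δ := by
    rw [integral_eq_lintegral_of_nonneg_ae (ae_of_all _ fun _ ↦ exp_nonneg _)
      hFν.aestronglyMeasurable]
    exact ENNReal.toReal_lt_of_lt_ofReal hs
  calc ∫ h, F h s ∂Q ≤ ∫ h, llr Q ν h ∂Q + log (∫ h, exp (F h s) ∂ν) :=
        integral_le_integral_llr_add_log_integral_exp hQν hllr hFQ hFν
    _ < ∫ h, llr Q ν h ∂Q + log (1 / δ) := by
        gcongr
        exact integral_exp_pos hFν

theorem exp_neg_mul_le_one_sub_mul (c : ℝ) {t : ℝ} (ht₀ : 0 ≤ t) (ht₁ : t ≤ 1) :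
    exp (-c * t) ≤ 1 - (1 - exp (-c)) * t := by
  have := convexOn_exp.2 (Set.mem_univ (-c)) (Set.mem_univ 0) ht₀ (sub_nonneg.2 ht₁) (by ring)
  simp only [smul_eq_mul, mul_zero, add_zero, exp_zero] at this
  rw [mul_comm]
  linarith

section Catoni

variable {Ω Z : Type*} [MeasurableSpace Z]

theorem integrable_exp_neg_mul_of_mem_Icc (P : Measure Z) [IsFiniteMeasure P] {f : Z → ℝ}
    (hf : Measurable f) (hf₀ : ∀ z, 0 ≤ f z) (hf₁ : ∀ z, f z ≤ 1) (c : ℝ) :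
    Integrable (fun z ↦ exp (-c * f z)) P :=
  .of_mem_Icc 0 (1 + exp (-c)) (hf.const_mul (-c)).exp.aemeasurable <| ae_of_all _ fun z ↦
    ⟨(exp_pos _).le, (exp_neg_mul_le_one_sub_mul c (hf₀ z) (hf₁ z)).trans <| by
      nlinarith [exp_pos (-c), hf₀ z, hf₁ z]⟩

theorem integral_exp_neg_mul_le (P : Measure Z) [IsProbabilityMeasure P] {f : Z → ℝ}
    (hf : Measurable f) (hf₀ : ∀ z, 0 ≤ f z) (hf₁ : ∀ z, f z ≤ 1) (c : ℝ) :
    ∫ z, exp (-c * f z) ∂P ≤ exp (-(1 - exp (-c)) * ∫ z, f z ∂P) := by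
  have hfP : Integrable f P := .of_mem_Icc 0 1 hf.aemeasurable (ae_of_all _ fun z ↦ ⟨hf₀ z, hf₁ z⟩)
  calc ∫ z, exp (-c * f z) ∂P ≤ ∫ z, 1 - (1 - exp (-c)) * f z ∂P :=
        integral_mono (integrable_exp_neg_mul_of_mem_Icc P hf hf₀ hf₁ c)
          ((integrable_const 1).sub (hfP.const_mul _))
          fun z ↦ exp_neg_mul_le_one_sub_mul c (hf₀ z) (hf₁ z)
    _ = 1 + -(1 - exp (-c)) * ∫ z, f z ∂P := by
        rw [integral_sub (integrable_const 1) (hfP.const_mul _), integral_const_mul]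
        simp only [integral_const, probReal_univ, smul_eq_mul, one_mul]
        ring
    _ ≤ exp (-(1 - exp (-c)) * ∫ z, f z ∂P) := by rw [add_comm]; exact add_one_le_exp _

def catoniExponent (P : Measure Z) (ℓ : Ω → Z → ℝ) (c : ℝ) (m : ℕ) (h : Ω) (s : Fin m → Z) :
    ℝ :=
  m * (1 - exp (-c)) * ∫ z, ℓ h z ∂P - c * ∑ i, ℓ h (s i)

theorem measurable_catoniExponent [MeasurableSpace Ω] (P : Measure Z) [SFinite P] {ℓ : Ω → Z → ℝ}
    (hℓ : Measurable (Function.uncurry ℓ)) (c : ℝ) (m : ℕ) :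
    Measurable (Function.uncurry (catoniExponent P ℓ c m)) := by
  have hrisk : Measurable fun h ↦ ∫ z, ℓ h z ∂P :=
    hℓ.stronglyMeasurable.integral_prod_right'.measurable
  have hsample : Measurable fun p : Ω × (Fin m → Z) ↦ ∑ i, ℓ p.1 (p.2 i) :=
    Finset.measurable_sum _ fun i _ ↦
      hℓ.comp (measurable_fst.prodMk ((measurable_pi_apply i).comp measurable_snd))
  exact ((hrisk.comp measurable_fst).const_mul _).sub (hsample.const_mul c)

theorem lintegral_exp_catoniExponent_le_one (P : Measure Z) [IsProbabilityMeasure P]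
    {ℓ : Ω → Z → ℝ} (h : Ω) (hℓ : Measurable (ℓ h)) (hℓ₀ : ∀ z, 0 ≤ ℓ h z)
    (hℓ₁ : ∀ z, ℓ h z ≤ 1) (c : ℝ) (m : ℕ) :
    ∫⁻ s, ENNReal.ofReal (exp (catoniExponent P ℓ c m h s)) ∂(Measure.pi fun _ : Fin m ↦ P)
      ≤ 1 := by
  set a := (1 - exp (-c)) * ∫ z, ℓ h z ∂P
  have hexp : ∀ s : Fin m → Z, exp (catoniExponent P ℓ c m h s)
      = exp (m * a) * ∏ i, exp (-c * ℓ h (s i)) := by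
    intro s
    rw [catoniExponent, ← exp_sum, ← exp_add, Finset.mul_sum]
    congr 1
    simp only [a, neg_mul, Finset.sum_neg_distrib]
    ring
  have hint := (Integrable.fintype_prod (μ := fun _ : Fin m ↦ P)
    fun _ ↦ integrable_exp_neg_mul_of_mem_Icc P hℓ hℓ₀ hℓ₁ c).const_mul (exp (m * a))
  simp_rw [hexp]
  rw [← ofReal_integral_eq_lintegral_ofReal hint
    (ae_of_all _ fun s ↦ by positivity), integral_const_mul,
    integral_fintype_prod_eq_pow (fun z ↦ exp (-c * ℓ h z)),
    Fintype.card_fin, ENNReal.ofReal_le_one]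
  calc exp (m * a) * (∫ z, exp (-c * ℓ h z) ∂P) ^ m ≤ exp (m * a) * exp (-a) ^ m := by
        gcongr
        simpa only [a, neg_mul] using integral_exp_neg_mul_le P hℓ hℓ₀ hℓ₁ c
    _ = 1 := by rw [← exp_nat_mul, ← exp_add]; simp

theorem integrable_catoniExponent_and_integral_eq [MeasurableSpace Ω] (P : Measure Z)
    [IsProbabilityMeasure P] (Q : Measure Ω) [IsFiniteMeasure Q] {ℓ : Ω → Z → ℝ} (hℓ : Measurable (Function.uncurry ℓ))
    (hℓ₀ : ∀ h z, 0 ≤ ℓ h z) (hℓ₁ : ∀ h z, ℓ h z ≤ 1) (c : ℝ) {m : ℕ} (s : Fin m → Z) :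
    Integrable (fun h ↦ catoniExponent P ℓ c m h s) Q ∧
      ∫ h, catoniExponent P ℓ c m h s ∂Q
        = m * (1 - exp (-c)) * ∫ h, ∫ z, ℓ h z ∂P ∂Q - c * ∑ i, ∫ h, ℓ h (s i) ∂Q := by
  have hrisk : Integrable (fun h ↦ ∫ z, ℓ h z ∂P) Q := by
    refine .of_bound hℓ.stronglyMeasurable.integral_prod_right'.aestronglyMeasurable 1
      (ae_of_all _ fun h ↦ ?_)
    simpa using norm_integral_le_of_norm_le_const (μ := P) (f := ℓ h) (C := 1) <|
      ae_of_all _ fun z ↦ by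
      rw [Real.norm_eq_abs, abs_le]
      exact ⟨by linarith [hℓ₀ h z], hℓ₁ h z⟩
  have hloss : ∀ i, Integrable (fun h ↦ ℓ h (s i)) Q := fun i ↦
    .of_mem_Icc 0 1 (hℓ.comp measurable_prodMk_right).aemeasurable
      (ae_of_all _ fun h ↦ ⟨hℓ₀ h (s i), hℓ₁ h (s i)⟩)
  have hsum : Integrable (fun h ↦ c * ∑ i, ℓ h (s i)) Q :=
    (integrable_finsetSum _ fun i _ ↦ hloss i).const_mul c
  refine ⟨(hrisk.const_mul _).sub hsum, ?_⟩
  simp only [catoniExponent]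
  rw [integral_sub (hrisk.const_mul _) hsum,
    integral_const_mul, integral_const_mul, integral_finsetSum _ fun i _ ↦ hloss i]

end Catoni

theorem ofReal_le_catoni_bound {m : ℕ} {c R K L : ℝ} (e : Fin m → ℝ) (hc : 0 < c)
    (h : m * (1 - exp (-c)) * R - c * ∑ i, e i < K + L) :
    ENNReal.ofReal R ≤ ENNReal.ofReal (c / (1 - exp (-c))) *
      (ENNReal.ofReal (1 / m * ∑ i, e i)
        + (ENNReal.ofReal K + ENNReal.ofReal L) / ENNReal.ofReal (m * c)) := by
  have hec : 0 < 1 - exp (-c) := by simpa using exp_lt_one_iff.2 (neg_lt_zero.2 hc)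
  rcases Nat.eq_zero_or_pos m with rfl | hm
  -- for `m = 0` the bound is `⊤` because `x / 0 = ⊤` in `ℝ≥0∞` when `x ≠ 0`; hence the strict `<`
  · have hKL : ENNReal.ofReal K + ENNReal.ofReal L ≠ 0 := by
      simp only [Finset.univ_eq_empty, Finset.sum_empty, CharP.cast_eq_zero, zero_mul, mul_zero,
        sub_zero] at h
      simp only [ne_eq, add_eq_zero, ENNReal.ofReal_eq_zero, not_and_or, not_le]
      by_contra! hKL
      linarith [hKL.1, hKL.2]
    simp [ENNReal.div_zero hKL, ENNReal.mul_top, div_pos hc hec]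
  have hm' : (0 : ℝ) < m := Nat.cast_pos.2 hm
  have hR : R ≤ c / (1 - exp (-c)) * (1 / m * ∑ i, e i + (K + L) / (m * c)) := by
    rw [show c / (1 - exp (-c)) * (1 / m * ∑ i, e i + (K + L) / (m * c))
      = (c * ∑ i, e i + (K + L)) / (m * (1 - exp (-c))) by field_simp, le_div_iff₀ (by positivity)]
    linarith
  calc ENNReal.ofReal R
      ≤ ENNReal.ofReal (c / (1 - exp (-c)))
          * ENNReal.ofReal (1 / m * ∑ i, e i + (K + L) / (m * c)) := by
        rw [← ENNReal.ofReal_mul (div_pos hc hec).le]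
        exact ENNReal.ofReal_le_ofReal hR
    _ ≤ _ := by
        gcongr
        refine ENNReal.ofReal_add_le.trans ?_
        gcongr
        rw [ENNReal.ofReal_div_of_pos (by positivity)]
        gcongr
        exact ENNReal.ofReal_add_le

-- `Y = {-1, 1}` is encoded as `Bool`.
theorem pac_bayes_catoni_general_loss_general
    {X : Type*} [MeasurableSpace X] {Ω : Type*} [MeasurableSpace Ω]
    (P : Measure (X × Bool)) [IsProbabilityMeasure P]
    (pr : Measure Ω) [IsProbabilityMeasure pr]
    (ℓ : Ω → X → Bool → ℝ)
    (hℓmeas : Measurable (fun p : Ω × (X × Bool) => ℓ p.1 p.2.1 p.2.2))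
    (hℓ0 : ∀ h x y, 0 ≤ ℓ h x y) (hℓ1 : ∀ h x y, ℓ h x y ≤ 1)
    (m : ℕ) (c : ℝ) (hc : 0 < c) (δ : ℝ) (hδ0 : 0 < δ) :
    ENNReal.ofReal (1 - δ) ≤
      (Measure.pi fun _ : Fin m => P)
        {s | ∀ Q : Measure Ω, IsProbabilityMeasure Q →
          ENNReal.ofReal (∫ z, ∫ h, ℓ h z.1 z.2 ∂Q ∂P)
            ≤ ENNReal.ofReal (c / (1 - Real.exp (-c)))
                * (ENNReal.ofReal ((1 / (m : ℝ)) * ∑ i : Fin m, ∫ h, ℓ h (s i).1 (s i).2 ∂Q)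
                   + (klDivergence Q pr + ENNReal.ofReal (Real.log (1 / δ)))
                       / ENNReal.ofReal ((m : ℝ) * c))} := by
  have hℓ : Measurable (Function.uncurry fun h (z : X × Bool) ↦ ℓ h z.1 z.2) := hℓmeas
  have hℓ₀ (h : Ω) (z : X × Bool) : 0 ≤ ℓ h z.1 z.2 := hℓ0 h z.1 z.2
  have hℓ₁ (h : Ω) (z : X × Bool) : ℓ h z.1 z.2 ≤ 1 := hℓ1 h z.1 z.2
  refine (pacBayes_change_of_measure (Measure.pi fun _ : Fin m ↦ P) pr
    (measurable_catoniExponent P hℓ c m) (fun h ↦ lintegral_exp_catoniExponent_le_one P h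
      (hℓ.comp measurable_prodMk_left) (hℓ₀ h) (hℓ₁ h) c m) hδ0).trans
    (measure_mono fun s hs Q hQ ↦ ?_)
  by_cases hKL : Q ≪ pr ∧ Integrable (llr Q pr) Q
  · obtain ⟨hint, hintegral⟩ := integrable_catoniExponent_and_integral_eq P Q hℓ hℓ₀ hℓ₁ c s
    have hrisk := hs Q hQ hKL.1 hKL.2 hint
    rw [hintegral, integral_integral_swap (Integrable.of_mem_Icc 0 1 hℓ.aemeasurable
      (ae_of_all _ fun p ↦ ⟨hℓ₀ p.1 p.2, hℓ₁ p.1 p.2⟩))] at hrisk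
    rw [klDivergence, if_pos hKL]
    exact ofReal_le_catoni_bound _ hc hrisk
  · have hcoef : ENNReal.ofReal (c / (1 - exp (-c))) ≠ 0 := by
      simpa using div_pos hc (sub_pos.2 (exp_lt_one_iff.2 (neg_lt_zero.2 hc)))
    rw [klDivergence, if_neg hKL, top_add, ENNReal.top_div_of_ne_top ENNReal.ofReal_ne_top,
      add_top, ENNReal.mul_top hcoef]
    exact le_top

theorem pac_bayes_catoni_general_loss
    {X : Type*} [MeasurableSpace X] {Ω : Type*} [MeasurableSpace Ω]
    (P : Measure (X × Bool)) [IsProbabilityMeasure P]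
    (pr : Measure Ω) [IsProbabilityMeasure pr]
    (ℓ : Ω → X → Bool → ℝ)
    (hℓmeas : Measurable (fun p : Ω × (X × Bool) => ℓ p.1 p.2.1 p.2.2))
    (hℓ0 : ∀ h x y, 0 ≤ ℓ h x y) (hℓ1 : ∀ h x y, ℓ h x y ≤ 1)
    (m : ℕ) (c : ℝ) (hc : 0 < c) (δ : ℝ) (hδ0 : 0 < δ) (hδ1 : δ ≤ 1) :
    ENNReal.ofReal (1 - δ) ≤
      (Measure.pi fun _ : Fin m => P)
        {s | ∀ Q : Measure Ω, IsProbabilityMeasure Q →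
          ENNReal.ofReal (∫ z, ∫ h, ℓ h z.1 z.2 ∂Q ∂P)
            ≤ ENNReal.ofReal (c / (1 - Real.exp (-c)))
                * (ENNReal.ofReal ((1 / (m : ℝ)) * ∑ i : Fin m, ∫ h, ℓ h (s i).1 (s i).2 ∂Q)
                   + (klDivergence Q pr + ENNReal.ofReal (Real.log (1 / δ)))
                       / ENNReal.ofReal ((m : ℝ) * c))} :=
  pac_bayes_catoni_general_loss_general P pr ℓ hℓmeas hℓ0 hℓ1 m c hc δ hδ0
end
end

section
/- Let P_S be a probability measure on X × Y, let H be a set of measurable classifiers with prior probability measure π on H, let b > 0 and δ ∈ (0,1]. Then with probability at least 1 − δ over the draw of an i.i.d. sample S = ((x_1,y_1),…,(x_{m_s},y_{m_s})) ∼ (P_S)^{m_s}, simultaneously for all posteriors Q on H: e_{P_S}(Q) ≤ (b/(1−e^{−b})) · [ ê_S(Q) + (2·KL(Q‖π) + ln(1/δ)) / (m_s·b) ], where ê_S(Q) = (1/m_s) Σ_{i=1}^{m_s} E_{h∼Q} E_{h'∼Q} 1[h(x_i) ≠ y_i]·1[h'(x_i) ≠ y_i] is the empirical expected joint error. -/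
/-!
Catoni's argument, run on pairs of classifiers. For a fixed pair `p = (h, h')` the joint loss
`ℓ(p, ·)` is `{0, 1}`-valued, so `E exp (-b ℓ(p, ·)) = 1 - (1 - e^{-b}) e(p)`, and the exponent
`F_S(p) = -b Σᵢ ℓ(p, zᵢ) - m log E exp (-b ℓ(p, ·))` has `E_S exp F_S(p) = 1`. By Fubini and
Markov, `E_{π⊗π} exp F_S ≤ 1/δ` with probability at least `1 - δ`. On that event the
Donsker–Varadhan change of measure from `π ⊗ π` to `Q ⊗ Q`, applied one factor at a time, gives
`E_{Q⊗Q} F_S ≤ 2 KL(Q‖π) + ln (1/δ)`, and `log (1 - x) ≤ -x` gives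
`F_S(p) ≥ m (1 - e^{-b}) e(p) - b Σᵢ ℓ(p, zᵢ)`; rearranging yields the bound.
-/

open MeasureTheory ProbabilityTheory Real
open scoped ENNReal Classical

noncomputable section

namespace PacBayes

variable {α β Θ Z : Type*} [MeasurableSpace α] [MeasurableSpace β] [MeasurableSpace Z]

lemma integrable_of_abs_le {μ : Measure α} [IsFiniteMeasure μ] {f : α → ℝ} (hf : Measurable f)
    {C : ℝ} (hfC : ∀ x, |f x| ≤ C) : Integrable f μ :=
  .of_bound hf.aestronglyMeasurable C (ae_of_all _ hfC)

lemma abs_exp_le_of_abs_le {x C : ℝ} (hx : |x| ≤ C) : |exp x| ≤ exp C := by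
  rw [abs_of_pos (exp_pos x)]
  exact exp_le_exp.2 (abs_le.1 hx).2

lemma abs_mul_le_abs_of_abs_le_one {t x : ℝ} (hx : |x| ≤ 1) : |t * x| ≤ |t| := by
  simpa [abs_mul] using mul_le_of_le_one_right (abs_nonneg t) hx

lemma integrable_exp_mul_of_abs_le_one {μ : Measure α} [IsFiniteMeasure μ] {f : α → ℝ}
    (hf : Measurable f) (hf1 : ∀ x, |f x| ≤ 1) (t : ℝ) :
    Integrable (fun x ↦ exp (t * f x)) μ :=
  integrable_of_abs_le (measurable_const.mul hf).exp fun x ↦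
    abs_exp_le_of_abs_le (abs_mul_le_abs_of_abs_le_one (hf1 x))

lemma abs_log_integral_exp_le {μ : Measure α} [IsProbabilityMeasure μ] {f : α → ℝ}
    (hf : Measurable f) {C : ℝ} (hfC : ∀ x, |f x| ≤ C) :
    |log (∫ x, exp (f x) ∂μ)| ≤ C := by
  have hint : Integrable (fun x ↦ exp (f x)) μ :=
    integrable_of_abs_le hf.exp fun x ↦ abs_exp_le_of_abs_le (hfC x)
  have hlow : exp (-C) ≤ ∫ x, exp (f x) ∂μ := by
    simpa using integral_mono (integrable_const _) hint
      fun x ↦ exp_le_exp.2 (neg_le_of_abs_le (hfC x))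
  have hup : ∫ x, exp (f x) ∂μ ≤ exp C := by
    simpa using integral_mono hint (integrable_const _)
      fun x ↦ exp_le_exp.2 (abs_le.1 (hfC x)).2
  refine abs_le.2 ⟨?_, ?_⟩
  · simpa using log_le_log (exp_pos _) hlow
  · simpa using log_le_log ((exp_pos (-C)).trans_le hlow) hup

lemma ofReal_one_sub_le_measure_le_one_div {μ : Measure α} [IsProbabilityMeasure μ] {G : α → ℝ}
    (hGm : Measurable G) (hG0 : ∀ x, 0 ≤ G x) (hGint : Integrable G μ) (hG1 : ∫ x, G x ∂μ ≤ 1)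
    {δ : ℝ} (hδ : 0 < δ) :
    ENNReal.ofReal (1 - δ) ≤ μ {x | G x ≤ 1 / δ} := by
  set s := {x | 1 / δ ≤ G x}
  have hmarkov : μ s ≤ ENNReal.ofReal δ := by
    have := (mul_meas_ge_le_integral_of_nonneg (ae_of_all _ hG0) hGint (1 / δ)).trans hG1
    rw [one_div_mul_eq_div, div_le_one hδ] at this
    rw [← ofReal_measureReal]
    exact ENNReal.ofReal_le_ofReal this
  calc ENNReal.ofReal (1 - δ) = 1 - ENNReal.ofReal δ := by
        rw [ENNReal.ofReal_sub _ hδ.le, ENNReal.ofReal_one]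
    _ ≤ 1 - μ s := tsub_le_tsub_left hmarkov 1
    _ = μ sᶜ := (prob_compl_eq_one_sub (measurableSet_le measurable_const hGm)).symm
    _ ≤ μ {x | G x ≤ 1 / δ} := measure_mono fun x (hx : ¬ 1 / δ ≤ G x) ↦ (not_le.1 hx).le

theorem integral_le_integral_llr_add_log_integral_exp {μ ν : Measure α}
    [IsProbabilityMeasure μ] [SigmaFinite ν] (hμν : μ ≪ ν) (hllr : Integrable (llr μ ν) μ)
    {f : α → ℝ} (hfμ : Integrable f μ) (hfν : Integrable (fun x ↦ exp (f x)) ν) :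
    ∫ x, f x ∂μ ≤ ∫ x, llr μ ν x ∂μ + log (∫ x, exp (f x) ∂ν) := by
  have : NeZero ν := ⟨fun h ↦ NeZero.ne μ (Measure.absolutelyContinuous_zero_iff.mp (h ▸ hμν))⟩
  have : IsProbabilityMeasure (ν.tilted f) := isProbabilityMeasure_tilted hfν
  have hμν' : μ ≪ ν.tilted f := hμν.trans (absolutelyContinuous_tilted hfν)
  -- Gibbs' inequality for `μ` against the tilted measure `ν.tilted f`.
  have hgibbs := InformationTheory.integral_llr_add_sub_measure_univ_nonneg hμν'
    (integrable_llr_tilted_right hμν hfμ hllr hfν)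
  rw [integral_llr_tilted_right hμν hfμ hfν hllr] at hgibbs
  simp only [probReal_univ] at hgibbs
  linarith

theorem integral_prod_le_integral_llr_add_integral_llr_add_log
    {μ₁ ν₁ : Measure α} {μ₂ ν₂ : Measure β} [IsProbabilityMeasure μ₁] [IsProbabilityMeasure ν₁]
    [IsProbabilityMeasure μ₂] [IsProbabilityMeasure ν₂]
    (h₁ : μ₁ ≪ ν₁) (hllr₁ : Integrable (llr μ₁ ν₁) μ₁)
    (h₂ : μ₂ ≪ ν₂) (hllr₂ : Integrable (llr μ₂ ν₂) μ₂)
    {g : α × β → ℝ} (hg : Measurable g) {C : ℝ} (hgC : ∀ p, |g p| ≤ C) :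
    ∫ p, g p ∂(μ₁.prod μ₂) ≤ ∫ x, llr μ₁ ν₁ x ∂μ₁ + ∫ y, llr μ₂ ν₂ y ∂μ₂
      + log (∫ p, exp (g p) ∂(ν₁.prod ν₂)) := by
  set G : α → ℝ := fun x ↦ log (∫ y, exp (g (x, y)) ∂ν₂)
  have hgx : ∀ x, Measurable fun y ↦ g (x, y) := fun x ↦ hg.comp measurable_prodMk_left
  have hGm : Measurable G :=
    (hg.exp.stronglyMeasurable.integral_prod_right' (ν := ν₂)).measurable.log
  have hGC : ∀ x, |G x| ≤ C := fun x ↦ abs_log_integral_exp_le (hgx x) fun y ↦ hgC (x, y)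
  have hexpG : ∀ x, exp (G x) = ∫ y, exp (g (x, y)) ∂ν₂ := fun x ↦
    exp_log (integral_exp_pos (integrable_of_abs_le (hgx x).exp
      fun y ↦ abs_exp_le_of_abs_le (hgC (x, y))))
  have hinner : ∀ x, ∫ y, g (x, y) ∂μ₂ ≤ ∫ y, llr μ₂ ν₂ y ∂μ₂ + G x := fun x ↦
    integral_le_integral_llr_add_log_integral_exp h₂ hllr₂
      (integrable_of_abs_le (hgx x) fun y ↦ hgC (x, y))
      (integrable_of_abs_le (hgx x).exp fun y ↦ abs_exp_le_of_abs_le (hgC (x, y)))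
  have hinner_int : Integrable (fun x ↦ ∫ y, g (x, y) ∂μ₂) μ₁ :=
    (integrable_of_abs_le hg hgC).integral_prod_left
  have hG_int : Integrable G μ₁ := integrable_of_abs_le hGm hGC
  have houter : ∫ x, G x ∂μ₁ ≤ ∫ x, llr μ₁ ν₁ x ∂μ₁ + log (∫ x, exp (G x) ∂ν₁) :=
    integral_le_integral_llr_add_log_integral_exp h₁ hllr₁ hG_int
      (integrable_of_abs_le hGm.exp fun x ↦ abs_exp_le_of_abs_le (hGC x))
  calc ∫ p, g p ∂(μ₁.prod μ₂) = ∫ x, ∫ y, g (x, y) ∂μ₂ ∂μ₁ :=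
        integral_prod g (integrable_of_abs_le hg hgC)
    _ ≤ ∫ x, (∫ y, llr μ₂ ν₂ y ∂μ₂ + G x) ∂μ₁ :=
        integral_mono hinner_int ((integrable_const _).add hG_int) hinner
    _ = ∫ y, llr μ₂ ν₂ y ∂μ₂ + ∫ x, G x ∂μ₁ := by
        rw [integral_add (integrable_const _) hG_int, integral_const, probReal_univ, one_smul]
    _ ≤ _ := by
        rw [integral_prod _ (integrable_of_abs_le hg.exp fun p ↦ abs_exp_le_of_abs_le (hgC p))]
        simp only [← hexpG]
        linarith

def catoniExponent (P : Measure Z) (ℓ : Θ → Z → ℝ) (b : ℝ) {n : ℕ} (S : Fin n → Z) (θ : Θ) : ℝ :=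
  -b * ∑ i, ℓ θ (S i) - n * cgf (ℓ θ) P (-b)

section Catoni

variable {P : Measure Z} [IsProbabilityMeasure P] {ℓ : Θ → Z → ℝ} {b : ℝ} {n : ℕ}

lemma integral_exp_catoniExponent (θ : Θ) (hθ : Integrable (fun z ↦ exp (-b * ℓ θ z)) P) :
    ∫ S, exp (catoniExponent P ℓ b S θ) ∂(Measure.pi fun _ : Fin n ↦ P) = 1 := by
  have hsplit : ∀ S : Fin n → Z, exp (catoniExponent P ℓ b S θ)
      = exp (-(n * cgf (ℓ θ) P (-b))) * ∏ i, exp (-b * ℓ θ (S i)) := fun S ↦ by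
    rw [← exp_sum, ← exp_add, catoniExponent, Finset.mul_sum]
    ring_nf
  simp_rw [hsplit]
  rw [integral_const_mul, integral_fintype_prod_eq_pow (fun z ↦ exp (-b * ℓ θ z)), ← mgf,
    ← exp_cgf hθ, ← exp_nat_mul, ← exp_add, Fintype.card_fin]
  simp

lemma abs_catoniExponent_le (S : Fin n → Z) (θ : Θ) (hm : Measurable (ℓ θ))
    (hℓ : ∀ z, |ℓ θ z| ≤ 1) :
    |catoniExponent P ℓ b S θ| ≤ 2 * n * |b| := by
  have hsum : |∑ i, ℓ θ (S i)| ≤ n := by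
    simpa using (Finset.abs_sum_le_sum_abs _ _).trans
      (Finset.sum_le_sum fun i (_ : i ∈ Finset.univ) ↦ hℓ (S i))
  have hcgf : |cgf (ℓ θ) P (-b)| ≤ |b| :=
    abs_log_integral_exp_le (measurable_const.mul hm) fun z ↦ by
      simpa using abs_mul_le_abs_of_abs_le_one (t := -b) (hℓ z)
  rw [catoniExponent]
  calc |-b * ∑ i, ℓ θ (S i) - n * cgf (ℓ θ) P (-b)|
      ≤ |b| * |∑ i, ℓ θ (S i)| + n * |cgf (ℓ θ) P (-b)| := by
        simpa [abs_mul] using abs_sub (-b * ∑ i, ℓ θ (S i)) (n * cgf (ℓ θ) P (-b))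
    _ ≤ |b| * n + n * |b| := by gcongr
    _ = 2 * n * |b| := by ring

lemma measurable_catoniExponent [MeasurableSpace Θ] (hℓ : Measurable (Function.uncurry ℓ)) :
    Measurable fun q : (Fin n → Z) × Θ ↦ catoniExponent P ℓ b q.1 q.2 := by
  have hmgf : Measurable fun θ ↦ mgf (ℓ θ) P (-b) :=
    (measurable_const.mul hℓ).exp.stronglyMeasurable.integral_prod_right'.measurable
  refine (measurable_const.mul (Finset.measurable_sum _ fun i _ ↦ ?_)).sub
    (measurable_const.mul (hmgf.log.comp measurable_snd))
  exact hℓ.comp (measurable_snd.prodMk ((measurable_pi_apply i).comp measurable_fst))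

lemma cgf_neg_le_of_eq_zero_or_one {f : Z → ℝ} (hm : Measurable f) (hf : ∀ z, f z = 0 ∨ f z = 1) :
    cgf f P (-b) ≤ -(1 - exp (-b)) * ∫ z, f z ∂P := by
  have hf1 : ∀ z, |f z| ≤ 1 := fun z ↦ by rcases hf z with h | h <;> simp [h]
  -- `t ↦ exp (-b * t)` is affine on `{0, 1}`.
  have hmgf : mgf f P (-b) = 1 - (1 - exp (-b)) * ∫ z, f z ∂P := by
    have hpt : ∀ z, exp (-b * f z) = 1 - (1 - exp (-b)) * f z := fun z ↦ by
      rcases hf z with h | h <;> simp [h]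
    simp_rw [mgf, hpt]
    rw [integral_sub (integrable_const 1) ((integrable_of_abs_le hm hf1).const_mul _),
      integral_const_mul, integral_const, probReal_univ, one_smul]
  have hpos : 0 < mgf f P (-b) := mgf_pos (integrable_exp_mul_of_abs_le_one hm hf1 _)
  rw [cgf]
  linarith [log_le_sub_one_of_pos hpos]

lemma mul_integral_le_catoniExponent (S : Fin n → Z) (θ : Θ) (hm : Measurable (ℓ θ))
    (hℓ : ∀ z, ℓ θ z = 0 ∨ ℓ θ z = 1) :
    n * (1 - exp (-b)) * ∫ z, ℓ θ z ∂P ≤ b * ∑ i, ℓ θ (S i) + catoniExponent P ℓ b S θ := by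
  have := mul_le_mul_of_nonneg_left (cgf_neg_le_of_eq_zero_or_one (P := P) (b := b) hm hℓ)
    n.cast_nonneg
  rw [catoniExponent]
  linarith

variable [MeasurableSpace Θ]

theorem ofReal_one_sub_le_measure_integral_exp_catoniExponent_le {ρ : Measure Θ}
    [IsProbabilityMeasure ρ] (hm : Measurable (Function.uncurry ℓ)) (hℓ : ∀ θ z, |ℓ θ z| ≤ 1)
    {δ : ℝ} (hδ : 0 < δ) :
    ENNReal.ofReal (1 - δ) ≤ (Measure.pi fun _ : Fin n ↦ P)
      {S | ∫ θ, exp (catoniExponent P ℓ b S θ) ∂ρ ≤ 1 / δ} := by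
  have hF := (measurable_catoniExponent (P := P) (b := b) (n := n) hm).exp
  have hFint : Integrable (fun q : (Fin n → Z) × Θ ↦ exp (catoniExponent P ℓ b q.1 q.2))
      ((Measure.pi fun _ : Fin n ↦ P).prod ρ) :=
    integrable_of_abs_le hF fun q ↦ abs_exp_le_of_abs_le
      (abs_catoniExponent_le q.1 q.2 (hm.comp measurable_prodMk_left) (hℓ q.2))
  refine ofReal_one_sub_le_measure_le_one_div hF.stronglyMeasurable.integral_prod_right'.measurable
    (fun S ↦ integral_nonneg fun θ ↦ (exp_pos _).le) hFint.integral_prod_left (le_of_eq ?_) hδ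
  calc _ = ∫ _ : Θ, (1 : ℝ) ∂ρ := by
        rw [integral_integral_swap hFint]
        exact integral_congr_ae (ae_of_all _ fun θ ↦ integral_exp_catoniExponent θ
          (integrable_exp_mul_of_abs_le_one (hm.comp measurable_prodMk_left) (hℓ θ) _))
    _ = 1 := by simp

theorem mul_integral_integral_le_catoni {μ : Measure Θ} [IsProbabilityMeasure μ]
    (hm : Measurable (Function.uncurry ℓ)) (hℓ : ∀ θ z, ℓ θ z = 0 ∨ ℓ θ z = 1)
    (S : Fin n → Z) :
    n * (1 - exp (-b)) * ∫ θ, ∫ z, ℓ θ z ∂P ∂μ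
      ≤ b * ∫ θ, ∑ i, ℓ θ (S i) ∂μ + ∫ θ, catoniExponent P ℓ b S θ ∂μ := by
  have hℓ1 : ∀ θ z, |ℓ θ z| ≤ 1 := fun θ z ↦ by rcases hℓ θ z with h | h <;> simp [h]
  have hmθ : ∀ θ, Measurable (ℓ θ) := fun θ ↦ hm.comp measurable_prodMk_left
  have hrisk : Integrable (fun θ ↦ ∫ z, ℓ θ z ∂P) μ :=
    integrable_of_abs_le hm.stronglyMeasurable.integral_prod_right'.measurable fun θ ↦ by
      simpa using norm_integral_le_of_norm_le_const (μ := P) (f := ℓ θ) (C := 1)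
        (ae_of_all _ (hℓ1 θ))
  have hemp : Integrable (fun θ ↦ ∑ i, ℓ θ (S i)) μ :=
    integrable_finsetSum _ fun i _ ↦ integrable_of_abs_le
      (hm.comp (measurable_id.prodMk measurable_const)) fun θ ↦ hℓ1 θ (S i)
  have hexp : Integrable (fun θ ↦ catoniExponent P ℓ b S θ) μ :=
    integrable_of_abs_le
      ((measurable_catoniExponent hm).comp (measurable_const.prodMk measurable_id)) fun θ ↦ abs_catoniExponent_le S θ (hmθ θ) (hℓ1 θ)
  rw [← integral_const_mul, ← integral_const_mul, ← integral_add (hemp.const_mul b) hexp]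
  exact integral_mono (hrisk.const_mul _) ((hemp.const_mul b).add hexp) fun θ ↦
    mul_integral_le_catoniExponent S θ (hmθ θ) (hℓ θ)

end Catoni

lemma ofReal_le_mul_add_div {A B D b c : ℝ} {D' : ℝ≥0∞} {n : ℕ} (hn : 0 < n) (hb : 0 < b)
    (hc : 0 < c) (h : n * c * A ≤ b * B + D) (hD : ENNReal.ofReal D ≤ D') :
    ENNReal.ofReal A
      ≤ ENNReal.ofReal (b / c) * (ENNReal.ofReal (1 / n * B) + D' / ENNReal.ofReal (n * b)) := by
  have hnb : (0 : ℝ) < n * b := mul_pos (Nat.cast_pos.2 hn) hb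
  have hA : A ≤ b / c * (1 / n * B + D / (n * b)) := by
    rw [div_mul_eq_mul_div, le_div_iff₀ hc]
    field_simp
    linarith
  calc ENNReal.ofReal A ≤ ENNReal.ofReal (b / c * (1 / n * B + D / (n * b))) :=
        ENNReal.ofReal_le_ofReal hA
    _ ≤ ENNReal.ofReal (b / c) * (ENNReal.ofReal (1 / n * B) + ENNReal.ofReal (D / (n * b))) := by
        rw [ENNReal.ofReal_mul (div_pos hb hc).le]
        gcongr
        exact ENNReal.ofReal_add_le
    _ ≤ _ := by
        rw [ENNReal.ofReal_div_of_pos hnb]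
        gcongr

section JointError

variable {X Ω : Type*} {ev : Ω → X → Bool}

def jointLoss (ev : Ω → X → Bool) (p : Ω × Ω) (z : X × Bool) : ℝ :=
  if ev p.1 z.1 ≠ z.2 ∧ ev p.2 z.1 ≠ z.2 then 1 else 0

lemma jointLoss_eq_zero_or_one (p : Ω × Ω) (z : X × Bool) :
    jointLoss ev p z = 0 ∨ jointLoss ev p z = 1 := by
  unfold jointLoss
  split_ifs <;> simp

lemma abs_jointLoss_le_one (p : Ω × Ω) (z : X × Bool) : |jointLoss ev p z| ≤ 1 := by
  rcases jointLoss_eq_zero_or_one (ev := ev) p z with h | h <;> simp [h]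

variable [MeasurableSpace X] [MeasurableSpace Ω]

lemma measurable_jointLoss (hev : Measurable (Function.uncurry ev)) :
    Measurable (Function.uncurry (jointLoss ev)) := by
  have hwrong : ∀ k : Ω × Ω → Ω, Measurable k →
      MeasurableSet {q : (Ω × Ω) × (X × Bool) | ev (k q.1) q.2.1 ≠ q.2.2} := fun k hk ↦
    (measurableSet_eq_fun (hev.comp ((hk.comp measurable_fst).prodMk
      (measurable_fst.comp measurable_snd))) (measurable_snd.comp measurable_snd)).compl
  exact Measurable.ite ((hwrong _ measurable_fst).inter (hwrong _ measurable_snd))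
    measurable_const measurable_const

variable (hev : Measurable (Function.uncurry ev)) {Q : Measure Ω} [IsProbabilityMeasure Q]
include hev

lemma integral_integral_jointLoss (z : X × Bool) :
    ∫ h, ∫ h', jointLoss ev (h, h') z ∂Q ∂Q = ∫ p, jointLoss ev p z ∂(Q.prod Q) :=
  (integral_prod _ (integrable_of_abs_le ((measurable_jointLoss hev).comp
    (measurable_id.prodMk measurable_const)) fun p ↦ abs_jointLoss_le_one p z)).symm

lemma integral_integral_integral_jointLoss (PS : Measure (X × Bool)) [IsProbabilityMeasure PS] :
    ∫ z, ∫ h, ∫ h', jointLoss ev (h, h') z ∂Q ∂Q ∂PS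
      = ∫ p, ∫ z, jointLoss ev p z ∂PS ∂(Q.prod Q) := by
  simp_rw [integral_integral_jointLoss hev]
  exact integral_integral_swap (integrable_of_abs_le
    ((measurable_jointLoss hev).comp measurable_swap) fun q ↦ abs_jointLoss_le_one q.2 q.1)

lemma sum_integral_integral_jointLoss {n : ℕ} (S : Fin n → X × Bool) :
    ∑ i, ∫ h, ∫ h', jointLoss ev (h, h') (S i) ∂Q ∂Q
      = ∫ p, ∑ i, jointLoss ev p (S i) ∂(Q.prod Q) := by
  simp_rw [integral_integral_jointLoss hev]
  exact (integral_finsetSum _ fun i _ ↦ integrable_of_abs_le ((measurable_jointLoss hev).comp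
    (measurable_id.prodMk measurable_const)) fun p ↦ abs_jointLoss_le_one p (S i)).symm

theorem mul_integral_jointLoss_le {PS : Measure (X × Bool)} [IsProbabilityMeasure PS]
    {pr : Measure Ω} [IsProbabilityMeasure pr] (hQ : Q ≪ pr) (hllr : Integrable (llr Q pr) Q)
    {b δ : ℝ} {n : ℕ} (S : Fin n → X × Bool)
    (hS : ∫ p, exp (catoniExponent PS (jointLoss ev) b S p) ∂(pr.prod pr) ≤ 1 / δ) :
    n * (1 - exp (-b)) * ∫ p, ∫ z, jointLoss ev p z ∂PS ∂(Q.prod Q)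
      ≤ b * ∫ p, ∑ i, jointLoss ev p (S i) ∂(Q.prod Q)
        + (2 * ∫ h, llr Q pr h ∂Q + log (1 / δ)) := by
  have hF : Measurable (catoniExponent PS (jointLoss ev) b S) :=
    (measurable_catoniExponent (measurable_jointLoss hev)).comp
      (measurable_const.prodMk measurable_id)
  have hFC : ∀ p, |catoniExponent PS (jointLoss ev) b S p| ≤ 2 * n * |b| := fun p ↦
    abs_catoniExponent_le S p ((measurable_jointLoss hev).comp measurable_prodMk_left)
      (abs_jointLoss_le_one p)
  have hexp_pos : 0 < ∫ p, exp (catoniExponent PS (jointLoss ev) b S p) ∂(pr.prod pr) :=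
    integral_exp_pos (integrable_of_abs_le hF.exp fun p ↦ abs_exp_le_of_abs_le (hFC p))
  have hdv := integral_prod_le_integral_llr_add_integral_llr_add_log hQ hllr hQ hllr hF hFC
  have hcatoni := mul_integral_integral_le_catoni (P := PS) (μ := Q.prod Q) (b := b)
    (measurable_jointLoss hev) jointLoss_eq_zero_or_one S
  linarith [log_le_log hexp_pos hS]

theorem ofReal_integral_jointLoss_le {PS : Measure (X × Bool)} [IsProbabilityMeasure PS]
    {pr : Measure Ω} [IsProbabilityMeasure pr] {b δ : ℝ} (hb : 0 < b) {n : ℕ} (hn : 0 < n)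
    (S : Fin n → X × Bool)
    (hS : ∫ p, exp (catoniExponent PS (jointLoss ev) b S p) ∂(pr.prod pr) ≤ 1 / δ) :
    ENNReal.ofReal (∫ z, ∫ h, ∫ h', jointLoss ev (h, h') z ∂Q ∂Q ∂PS)
      ≤ ENNReal.ofReal (b / (1 - exp (-b)))
        * (ENNReal.ofReal ((1 / (n : ℝ)) * ∑ i, ∫ h, ∫ h', jointLoss ev (h, h') (S i) ∂Q ∂Q)
          + (2 * klDivergence Q pr + ENNReal.ofReal (log (1 / δ))) / ENNReal.ofReal (n * b)) := by
  have hc : 0 < 1 - exp (-b) := by linarith [exp_lt_one_iff.2 (neg_lt_zero.2 hb)]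
  rw [integral_integral_integral_jointLoss hev, sum_integral_integral_jointLoss hev, klDivergence]
  split_ifs with hKL
  · refine ofReal_le_mul_add_div hn hb hc (mul_integral_jointLoss_le hev hKL.1 hKL.2 S hS) ?_
    calc ENNReal.ofReal (2 * ∫ h, llr Q pr h ∂Q + log (1 / δ))
        ≤ ENNReal.ofReal (2 * ∫ h, llr Q pr h ∂Q) + ENNReal.ofReal (log (1 / δ)) :=
          ENNReal.ofReal_add_le
      _ = _ := by rw [ENNReal.ofReal_mul zero_le_two, ENNReal.ofReal_ofNat]
  · rw [ENNReal.mul_top two_ne_zero, top_add, ENNReal.top_div_of_ne_top ENNReal.ofReal_ne_top,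
      add_top, ENNReal.mul_top (ENNReal.ofReal_pos.2 (div_pos hb hc)).ne']
    exact le_top

end JointError

end PacBayes

open PacBayes

theorem pac_bayes_joint_error
    {X : Type*} [MeasurableSpace X] {Ω : Type*} [MeasurableSpace Ω]
    (ev : Ω → X → Bool) (hev : Measurable (Function.uncurry ev))
    (PS : Measure (X × Bool)) [IsProbabilityMeasure PS]
    (pr : Measure Ω) [IsProbabilityMeasure pr]
    (ms : ℕ) (b : ℝ) (hb : 0 < b) (δ : ℝ) (hδ0 : 0 < δ) (hδ1 : δ ≤ 1) :
    ENNReal.ofReal (1 - δ) ≤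
      (Measure.pi fun _ : Fin ms => PS)
        {S | ∀ Q : Measure Ω, IsProbabilityMeasure Q →
          -- e_{P_S}(Q) ≤ b/(1-e^{-b}) [ ê_S(Q) + (2 KL(Q‖π) + ln(1/δ)) / (m_s b) ]
          ENNReal.ofReal (∫ z, ∫ h, ∫ h',
              (if ev h z.1 ≠ z.2 ∧ ev h' z.1 ≠ z.2 then (1 : ℝ) else 0) ∂Q ∂Q ∂PS)
            ≤ ENNReal.ofReal (b / (1 - Real.exp (-b)))
                * (ENNReal.ofReal ((1 / (ms : ℝ)) * ∑ i : Fin ms, ∫ h, ∫ h',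
                      (if ev h (S i).1 ≠ (S i).2 ∧ ev h' (S i).1 ≠ (S i).2 then (1 : ℝ) else 0)
                        ∂Q ∂Q)
                   + (2 * klDivergence Q pr + ENNReal.ofReal (Real.log (1 / δ)))
                       / ENNReal.ofReal ((ms : ℝ) * b))} := by
  rcases Nat.eq_zero_or_pos ms with rfl | hms
  · rcases hδ1.lt_or_eq with hδ1 | rfl
    · -- Without samples the right-hand side is `⊤` as soon as `log (1 / δ) > 0`.
      have hlog : ENNReal.ofReal (log (1 / δ)) ≠ 0 :=
        (ENNReal.ofReal_pos.2 (log_pos (one_lt_one_div hδ0 hδ1))).ne'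
      have hc : ENNReal.ofReal (b / (1 - exp (-b))) ≠ 0 :=
        (ENNReal.ofReal_pos.2 (div_pos hb (by linarith [exp_lt_one_iff.2 (neg_lt_zero.2 hb)]))).ne'
      refine (ENNReal.ofReal_le_one.2 (by linarith)).trans
        (measure_univ.symm.trans (congrArg _ (Set.eq_univ_of_forall fun S Q _ ↦ ?_).symm)).le
      rw [Nat.cast_zero, zero_mul, ENNReal.ofReal_zero, ENNReal.div_zero
        (fun h ↦ hlog (add_eq_zero.1 h).2), add_top, ENNReal.mul_top hc]
      exact le_top
    · simp
  refine (ofReal_one_sub_le_measure_integral_exp_catoniExponent_le (P := PS) (ρ := pr.prod pr)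
    (b := b) (measurable_jointLoss hev) abs_jointLoss_le_one hδ0).trans
    (measure_mono fun S hS Q _ ↦ ?_)
  exact ofReal_integral_jointLoss_le hev hb hms S hS
end
end

section
/- Let H be a symmetric set of measurable classifiers h : X → {−1,1} (if h ∈ H then −h ∈ H), let P_S and P_T be domains on X × {−1,1} with marginals D_S and D_T on X, and define the HΔH-distance d_{HΔH}(D_S, D_T) = 2·sup_{(h,h')∈H²} | E_{x∼D_S} 1[h(x) ≠ h'(x)] − E_{x∼D_T} 1[h(x) ≠ h'(x)] |. Then for all h ∈ H and all h* ∈ H: R_{P_T}(h) ≤ R_{P_S}(h) + (1/2)·d_{HΔH}(D_S, D_T) + R_{P_S}(h*) + R_{P_T}(h*). -/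
/-!
STATEMENT 8: Ben-David et al. domain adaptation bound (Theorem 1 of the paper),
stated for any `h ∈ H` and any `h* ∈ H` (so that `μ_{h*} = R_{P_S}(h*) + R_{P_T}(h*)`).
`Y = {-1,1}` is encoded as `Bool`; symmetry of `H` means closure under label flip.
-/

open MeasureTheory Real
open scoped ENNReal Classical

noncomputable section

theorem ben_david_bound
    {X : Type*} [MeasurableSpace X]
    (H : Set (X → Bool)) (hHmeas : ∀ f ∈ H, Measurable f)
    (hHsym : ∀ f ∈ H, (fun x => !(f x)) ∈ H)
    (PS PT : Measure (X × Bool)) [IsProbabilityMeasure PS] [IsProbabilityMeasure PT]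
    (h : X → Bool) (hh : h ∈ H) (hstar : X → Bool) (hhstar : hstar ∈ H) :
    -- R_{P_T}(h) ≤ R_{P_S}(h) + (1/2) d_{HΔH}(D_S,D_T) + R_{P_S}(h*) + R_{P_T}(h*)
    (PT {z | h z.1 ≠ z.2}).toReal
      ≤ (PS {z | h z.1 ≠ z.2}).toReal
        + (1 / 2) * (2 * ⨆ (f : X → Bool) (_ : f ∈ H) (g : X → Bool) (_ : g ∈ H),
            |((PS.map Prod.fst) {x | f x ≠ g x}).toReal
              - ((PT.map Prod.fst) {x | f x ≠ g x}).toReal|)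
        + (PS {z | hstar z.1 ≠ z.2}).toReal + (PT {z | hstar z.1 ≠ z.2}).toReal := by
  classical
  -- abbreviations
  set S : ℝ := ⨆ (f : X → Bool) (_ : f ∈ H) (g : X → Bool) (_ : g ∈ H),
      |((PS.map Prod.fst) {x | f x ≠ g x}).toReal
        - ((PT.map Prod.fst) {x | f x ≠ g x}).toReal| with hSdef
  -- every measure involved is finite
  have hfin : ∀ (μ : Measure (X × Bool)) [IsProbabilityMeasure μ] (s : Set (X × Bool)),
      μ s ≠ ⊤ := fun μ _ s => measure_ne_top μ s
  -- measurability of disagreement set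
  have hmeasset : MeasurableSet {x | h x ≠ hstar x} := by
    have : {x | h x ≠ hstar x} =
        (h ⁻¹' {true} ∩ hstar ⁻¹' {false}) ∪ (h ⁻¹' {false} ∩ hstar ⁻¹' {true}) := by
      ext x
      simp only [Set.mem_setOf_eq, Set.mem_union, Set.mem_inter_iff, Set.mem_preimage,
        Set.mem_singleton_iff]
      cases h x <;> cases hstar x <;> simp
    rw [this]
    exact ((hHmeas h hh (MeasurableSet.singleton true)).inter
        (hHmeas hstar hhstar (MeasurableSet.singleton false))).union
      ((hHmeas h hh (MeasurableSet.singleton false)).inter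
        (hHmeas hstar hhstar (MeasurableSet.singleton true)))
  have hmapS : (PS.map Prod.fst) {x | h x ≠ hstar x} = PS {z | h z.1 ≠ hstar z.1} := by
    rw [Measure.map_apply measurable_fst hmeasset]; rfl
  have hmapT : (PT.map Prod.fst) {x | h x ≠ hstar x} = PT {z | h z.1 ≠ hstar z.1} := by
    rw [Measure.map_apply measurable_fst hmeasset]; rfl
  -- subset facts
  have sub1 : {z : X × Bool | h z.1 ≠ z.2}
      ⊆ {z : X × Bool | hstar z.1 ≠ z.2} ∪ {z : X × Bool | h z.1 ≠ hstar z.1} := by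
    rintro ⟨x, y⟩ hz
    simp only [Set.mem_setOf_eq, Set.mem_union] at *
    by_cases hc : hstar x = y
    · exact Or.inr (fun he => hz (he.trans hc))
    · exact Or.inl hc
  have sub2 : {z : X × Bool | h z.1 ≠ hstar z.1}
      ⊆ {z : X × Bool | h z.1 ≠ z.2} ∪ {z : X × Bool | hstar z.1 ≠ z.2} := by
    rintro ⟨x, y⟩ hz
    simp only [Set.mem_setOf_eq, Set.mem_union] at *
    by_cases hc : h x = y
    · exact Or.inr (fun he => hz (hc.trans he.symm))
    · exact Or.inl hc
  -- step 1 : triangle on PT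
  have step1 : (PT {z | h z.1 ≠ z.2}).toReal
      ≤ (PT {z | hstar z.1 ≠ z.2}).toReal + (PT {z | h z.1 ≠ hstar z.1}).toReal := by
    rw [← ENNReal.toReal_add (measure_ne_top _ _) (measure_ne_top _ _)]
    exact ENNReal.toReal_mono
      (ENNReal.add_ne_top.2 ⟨measure_ne_top _ _, measure_ne_top _ _⟩)
      (le_trans (measure_mono sub1) (measure_union_le _ _))
  -- step 5 : triangle on PS
  have step5 : (PS {z | h z.1 ≠ hstar z.1}).toReal
      ≤ (PS {z | h z.1 ≠ z.2}).toReal + (PS {z | hstar z.1 ≠ z.2}).toReal := by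
    rw [← ENNReal.toReal_add (measure_ne_top _ _) (measure_ne_top _ _)]
    exact ENNReal.toReal_mono
      (ENNReal.add_ne_top.2 ⟨measure_ne_top _ _, measure_ne_top _ _⟩)
      (le_trans (measure_mono sub2) (measure_union_le _ _))
  -- step 4 : the sup bounds the particular difference
  have hbdd : ∀ f g : X → Bool,
      |((PS.map Prod.fst) {x | f x ≠ g x}).toReal
        - ((PT.map Prod.fst) {x | f x ≠ g x}).toReal| ≤ 1 := by
    intro f g
    have h1 : ((PS.map Prod.fst) {x | f x ≠ g x}).toReal ≤ 1 := by
      have := measure_mono (μ := PS.map Prod.fst) (Set.subset_univ {x | f x ≠ g x})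
      have huniv : (PS.map Prod.fst) Set.univ = 1 := by
        rw [Measure.map_apply measurable_fst MeasurableSet.univ]
        simp
      calc ((PS.map Prod.fst) {x | f x ≠ g x}).toReal
          ≤ ((PS.map Prod.fst) Set.univ).toReal :=
            ENNReal.toReal_mono (by rw [huniv]; exact ENNReal.one_ne_top) this
        _ = 1 := by rw [huniv]; simp
    have h2 : ((PT.map Prod.fst) {x | f x ≠ g x}).toReal ≤ 1 := by
      have := measure_mono (μ := PT.map Prod.fst) (Set.subset_univ {x | f x ≠ g x})
      have huniv : (PT.map Prod.fst) Set.univ = 1 := by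
        rw [Measure.map_apply measurable_fst MeasurableSet.univ]
        simp
      calc ((PT.map Prod.fst) {x | f x ≠ g x}).toReal
          ≤ ((PT.map Prod.fst) Set.univ).toReal :=
            ENNReal.toReal_mono (by rw [huniv]; exact ENNReal.one_ne_top) this
        _ = 1 := by rw [huniv]; simp
    have h1' : 0 ≤ ((PS.map Prod.fst) {x | f x ≠ g x}).toReal := ENNReal.toReal_nonneg
    have h2' : 0 ≤ ((PT.map Prod.fst) {x | f x ≠ g x}).toReal := ENNReal.toReal_nonneg
    rw [abs_le]; constructor <;> linarith
  have step4 : |((PS.map Prod.fst) {x | h x ≠ hstar x}).toReal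
        - ((PT.map Prod.fst) {x | h x ≠ hstar x}).toReal| ≤ S := by
    have bdd2 : ∀ f : X → Bool,
        (⨆ (_ : f ∈ H) (g : X → Bool) (_ : g ∈ H),
          |((PS.map Prod.fst) {x | f x ≠ g x}).toReal
            - ((PT.map Prod.fst) {x | f x ≠ g x}).toReal|) ≤ 1 := by
      intro f
      refine Real.iSup_le (fun _ => ?_) zero_le_one
      refine Real.iSup_le (fun g => ?_) zero_le_one
      exact Real.iSup_le (fun _ => hbdd f g) zero_le_one
    have hbdd3 : ∀ g : X → Bool,
        (⨆ (_ : g ∈ H),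
          |((PS.map Prod.fst) {x | h x ≠ g x}).toReal
            - ((PT.map Prod.fst) {x | h x ≠ g x}).toReal|) ≤ 1 := fun g =>
      Real.iSup_le (fun _ => hbdd h g) zero_le_one
    have hle2 : |((PS.map Prod.fst) {x | h x ≠ hstar x}).toReal
        - ((PT.map Prod.fst) {x | h x ≠ hstar x}).toReal|
        ≤ ⨆ (g : X → Bool) (_ : g ∈ H),
          |((PS.map Prod.fst) {x | h x ≠ g x}).toReal
            - ((PT.map Prod.fst) {x | h x ≠ g x}).toReal| := by
      have hle := le_ciSup (f := fun g : X → Bool => ⨆ (_ : g ∈ H),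
          |((PS.map Prod.fst) {x | h x ≠ g x}).toReal
            - ((PT.map Prod.fst) {x | h x ≠ g x}).toReal|)
        ⟨1, Set.forall_mem_range.2 hbdd3⟩ hstar
      rwa [ciSup_pos hhstar] at hle
    have hle1 : (⨆ (g : X → Bool) (_ : g ∈ H),
          |((PS.map Prod.fst) {x | h x ≠ g x}).toReal
            - ((PT.map Prod.fst) {x | h x ≠ g x}).toReal|) ≤ S := by
      have hle := le_ciSup (f := fun f : X → Bool => ⨆ (_ : f ∈ H) (g : X → Bool) (_ : g ∈ H),
          |((PS.map Prod.fst) {x | f x ≠ g x}).toReal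
            - ((PT.map Prod.fst) {x | f x ≠ g x}).toReal|)
        ⟨1, Set.forall_mem_range.2 bdd2⟩ h
      rw [ciSup_pos hh] at hle
      exact hle
    exact le_trans hle2 hle1
  -- combine
  have step3 : (PT {z | h z.1 ≠ hstar z.1}).toReal
      ≤ (PS {z | h z.1 ≠ hstar z.1}).toReal + S := by
    have := step4
    rw [hmapS, hmapT] at this
    have habs := abs_le.1 this
    linarith [habs.1, habs.2]
  have hhalf : (1 / 2 : ℝ) * (2 * S) = S := by ring
  rw [hhalf]
  linarith [step1, step3, step5]

end
end

section
/- Let H be a set of measurable classifiers, let P_S and P_T be domains on X × {−1,1} with marginals D_S and D_T on X, and define the domain disagreement dis_Q(D_S, D_T) = | d_{D_S}(Q) − d_{D_T}(Q) |. Then for all posteriors Q and Q' on H: R_{P_T}(G_Q) ≤ R_{P_S}(G_Q) + dis_Q(D_S, D_T) + [ R_{P_T}(G_{Q'}) + E_{h∼Q} E_{h'∼Q'} E_{x∼D_S} 1[h(x) ≠ h'(x)] + E_{h∼Q} E_{h'∼Q'} E_{x∼D_T} 1[h(x) ≠ h'(x)] ]. -/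
/-!
STATEMENT 9: PAC-Bayesian domain adaptation bound of Germain et al. (Theorem 2
of the paper), stated for arbitrary posteriors `Q` and `Q'` (the paper takes
`Q'` to be a minimizer of the target Gibbs risk).  `Y = {-1,1}` is `Bool`;
voters are indexed by a measurable space `Ω` through the evaluation map `ev`.
-/

open MeasureTheory Real
open scoped ENNReal Classical

noncomputable section

lemma integrable_of_bdd_one {α : Type*} [MeasurableSpace α] (μ : Measure α)
    [IsFiniteMeasure μ] {f : α → ℝ} (hm : AEStronglyMeasurable f μ)
    (hb : ∀ a, ‖f a‖ ≤ 1) : Integrable f μ :=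
  (integrable_const (1 : ℝ)).mono' hm (ae_of_all _ hb)

lemma ite_norm_le {p : Prop} [Decidable p] : ‖if p then (1:ℝ) else 0‖ ≤ 1 := by
  by_cases h : p <;> simp [h]

theorem pbda_bound
    {X : Type*} [MeasurableSpace X] {Ω : Type*} [MeasurableSpace Ω]
    (ev : Ω → X → Bool) (hev : Measurable (Function.uncurry ev))
    (PS PT : Measure (X × Bool)) [IsProbabilityMeasure PS] [IsProbabilityMeasure PT]
    (Q Q' : Measure Ω) [IsProbabilityMeasure Q] [IsProbabilityMeasure Q'] :
    -- R_{P_T}(G_Q) ≤ R_{P_S}(G_Q) + dis_Q(D_S,D_T)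
    --               + [ R_{P_T}(G_{Q'}) + E_{Q,Q'} E_{D_S} 1[h≠h'] + E_{Q,Q'} E_{D_T} 1[h≠h'] ]
    ∫ z, ∫ h, (if ev h z.1 ≠ z.2 then (1 : ℝ) else 0) ∂Q ∂PT
      ≤ ∫ z, ∫ h, (if ev h z.1 ≠ z.2 then (1 : ℝ) else 0) ∂Q ∂PS
        + |(∫ x, ∫ h, ∫ h', (if ev h x ≠ ev h' x then (1 : ℝ) else 0) ∂Q ∂Q
              ∂(PS.map Prod.fst))
           - ∫ x, ∫ h, ∫ h', (if ev h x ≠ ev h' x then (1 : ℝ) else 0) ∂Q ∂Q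
              ∂(PT.map Prod.fst)|
        + (∫ z, ∫ h, (if ev h z.1 ≠ z.2 then (1 : ℝ) else 0) ∂Q' ∂PT
           + (∫ h, ∫ h', ∫ x, (if ev h x ≠ ev h' x then (1 : ℝ) else 0)
                ∂(PS.map Prod.fst) ∂Q' ∂Q)
           + (∫ h, ∫ h', ∫ x, (if ev h x ≠ ev h' x then (1 : ℝ) else 0)
                ∂(PT.map Prod.fst) ∂Q' ∂Q)) := by
  haveI : IsProbabilityMeasure (PT.map Prod.fst) :=
    Measure.isProbabilityMeasure_map measurable_fst.aemeasurable
  haveI : IsProbabilityMeasure (PS.map Prod.fst) :=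
    Measure.isProbabilityMeasure_map measurable_fst.aemeasurable
  -- measurability of the two indicator functions
  have hfm : Measurable (fun w : Ω × (X × Bool) =>
      if ev w.1 w.2.1 ≠ w.2.2 then (1:ℝ) else 0) := by
    have h1 : Measurable fun w : Ω × (X × Bool) => ev w.1 w.2.1 :=
      hev.comp (measurable_fst.prodMk (measurable_fst.comp measurable_snd))
    have h2 : Measurable fun w : Ω × (X × Bool) => w.2.2 :=
      measurable_snd.comp measurable_snd
    have hset : MeasurableSet {w : Ω × (X × Bool) | ev w.1 w.2.1 ≠ w.2.2} :=
      (h1.prodMk h2) ((Set.toFinite {b : Bool × Bool | b.1 ≠ b.2}).measurableSet)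
    exact Measurable.ite hset measurable_const measurable_const
  have hgm : Measurable (fun w : (Ω × Ω) × X =>
      if ev w.1.1 w.2 ≠ ev w.1.2 w.2 then (1:ℝ) else 0) := by
    have h1 : Measurable fun w : (Ω × Ω) × X => ev w.1.1 w.2 :=
      hev.comp ((measurable_fst.comp measurable_fst).prodMk measurable_snd)
    have h2 : Measurable fun w : (Ω × Ω) × X => ev w.1.2 w.2 :=
      hev.comp ((measurable_snd.comp measurable_fst).prodMk measurable_snd)
    have hset : MeasurableSet {w : (Ω × Ω) × X | ev w.1.1 w.2 ≠ ev w.1.2 w.2} :=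
      (h1.prodMk h2) ((Set.toFinite {b : Bool × Bool | b.1 ≠ b.2}).measurableSet)
    exact Measurable.ite hset measurable_const measurable_const
  -- pointwise-in-z bound:  ∫ f dQ ≤ ∫ f dQ' + ∫ g d(Q⊗Q')
  have key : ∀ z : X × Bool,
      (∫ h, (if ev h z.1 ≠ z.2 then (1:ℝ) else 0) ∂Q)
        ≤ (∫ h, (if ev h z.1 ≠ z.2 then (1:ℝ) else 0) ∂Q')
          + ∫ p : Ω × Ω, (if ev p.1 z.1 ≠ ev p.2 z.1 then (1:ℝ) else 0)
              ∂(Q.prod Q') := by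
    intro z
    have m1 : Measurable fun p : Ω × Ω => (if ev p.1 z.1 ≠ z.2 then (1:ℝ) else 0) :=
      hfm.comp (measurable_fst.prodMk (measurable_const.prodMk measurable_const))
    have m2 : Measurable fun p : Ω × Ω => (if ev p.2 z.1 ≠ z.2 then (1:ℝ) else 0) :=
      hfm.comp (measurable_snd.prodMk (measurable_const.prodMk measurable_const))
    have m3 : Measurable fun p : Ω × Ω => (if ev p.1 z.1 ≠ ev p.2 z.1 then (1:ℝ) else 0) :=
      hgm.comp (measurable_id.prodMk measurable_const)
    have i1 : Integrable (fun p : Ω × Ω => (if ev p.1 z.1 ≠ z.2 then (1:ℝ) else 0))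
        (Q.prod Q') := integrable_of_bdd_one _ m1.aestronglyMeasurable fun a => ite_norm_le
    have i2 : Integrable (fun p : Ω × Ω => (if ev p.2 z.1 ≠ z.2 then (1:ℝ) else 0))
        (Q.prod Q') := integrable_of_bdd_one _ m2.aestronglyMeasurable fun a => ite_norm_le
    have i3 : Integrable (fun p : Ω × Ω => (if ev p.1 z.1 ≠ ev p.2 z.1 then (1:ℝ) else 0))
        (Q.prod Q') := integrable_of_bdd_one _ m3.aestronglyMeasurable fun a => ite_norm_le
    have e1 : (∫ h, (if ev h z.1 ≠ z.2 then (1:ℝ) else 0) ∂Q)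
        = ∫ p : Ω × Ω, (if ev p.1 z.1 ≠ z.2 then (1:ℝ) else 0) ∂(Q.prod Q') := by
      rw [MeasureTheory.integral_fun_fst
        (f := fun h : Ω => (if ev h z.1 ≠ z.2 then (1:ℝ) else 0))]
      simp
    have e2 : (∫ h, (if ev h z.1 ≠ z.2 then (1:ℝ) else 0) ∂Q')
        = ∫ p : Ω × Ω, (if ev p.2 z.1 ≠ z.2 then (1:ℝ) else 0) ∂(Q.prod Q') := by
      rw [MeasureTheory.integral_fun_snd
        (f := fun h : Ω => (if ev h z.1 ≠ z.2 then (1:ℝ) else 0))]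
      simp
    rw [e1, e2, ← integral_add i2 i3]
    refine integral_mono i1 (i2.add i3) fun p => ?_
    cases h1 : ev p.1 z.1 <;> cases h2 : ev p.2 z.1 <;> cases h3 : z.2 <;>
      simp [h1, h2, h3]
  -- integrate the pointwise bound over PT
  have IL : Integrable (fun z : X × Bool =>
      ∫ h, (if ev h z.1 ≠ z.2 then (1:ℝ) else 0) ∂Q) PT := by
    refine integrable_of_bdd_one _ ?_ fun z =>
      norm_integral_le_of_norm_le_const (ae_of_all _ fun h => ite_norm_le) |>.trans
        (by simp)
    exact (hfm.stronglyMeasurable.integral_prod_left').aestronglyMeasurable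
  have IR1 : Integrable (fun z : X × Bool =>
      ∫ h, (if ev h z.1 ≠ z.2 then (1:ℝ) else 0) ∂Q') PT := by
    refine integrable_of_bdd_one _ ?_ fun z =>
      norm_integral_le_of_norm_le_const (ae_of_all _ fun h => ite_norm_le) |>.trans
        (by simp)
    exact (hfm.stronglyMeasurable.integral_prod_left').aestronglyMeasurable
  have IR2 : Integrable (fun z : X × Bool =>
      ∫ p : Ω × Ω, (if ev p.1 z.1 ≠ ev p.2 z.1 then (1:ℝ) else 0) ∂(Q.prod Q')) PT := by
    have sm : StronglyMeasurable fun x : X =>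
        ∫ p : Ω × Ω, (if ev p.1 x ≠ ev p.2 x then (1:ℝ) else 0) ∂(Q.prod Q') :=
      hgm.stronglyMeasurable.integral_prod_left'
    refine integrable_of_bdd_one _ ?_ fun z =>
      norm_integral_le_of_norm_le_const (ae_of_all _ fun p => ite_norm_le) |>.trans
        (by simp)
    exact (sm.comp_measurable measurable_fst).aestronglyMeasurable
  have step : (∫ z, ∫ h, (if ev h z.1 ≠ z.2 then (1:ℝ) else 0) ∂Q ∂PT)
      ≤ (∫ z, ∫ h, (if ev h z.1 ≠ z.2 then (1:ℝ) else 0) ∂Q' ∂PT)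
        + ∫ z, (∫ p : Ω × Ω, (if ev p.1 z.1 ≠ ev p.2 z.1 then (1:ℝ) else 0) ∂(Q.prod Q'))
            ∂PT := by
    rw [← integral_add IR1 IR2]
    exact integral_mono IL (IR1.add IR2) key
  -- identify the last term with the e_T term of the statement
  have swap : (∫ z, (∫ p : Ω × Ω,
        (if ev p.1 z.1 ≠ ev p.2 z.1 then (1:ℝ) else 0) ∂(Q.prod Q')) ∂PT)
      = ∫ h, ∫ h', ∫ x, (if ev h x ≠ ev h' x then (1:ℝ) else 0)
          ∂(PT.map Prod.fst) ∂Q' ∂Q := by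
    have hunc : Integrable (Function.uncurry fun (z : X × Bool) (p : Ω × Ω) =>
        (if ev p.1 z.1 ≠ ev p.2 z.1 then (1:ℝ) else 0)) (PT.prod (Q.prod Q')) := by
      refine integrable_of_bdd_one _ ?_ fun a => ite_norm_le
      have : Measurable fun w : (X × Bool) × (Ω × Ω) =>
          (if ev w.2.1 w.1.1 ≠ ev w.2.2 w.1.1 then (1:ℝ) else 0) :=
        hgm.comp (measurable_snd.prodMk (measurable_fst.comp measurable_fst))
      exact this.aestronglyMeasurable
    rw [MeasureTheory.integral_integral_swap hunc]
    have hmap : ∀ p : Ω × Ω,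
        (∫ z : X × Bool, (if ev p.1 z.1 ≠ ev p.2 z.1 then (1:ℝ) else 0) ∂PT)
          = ∫ x, (if ev p.1 x ≠ ev p.2 x then (1:ℝ) else 0) ∂(PT.map Prod.fst) := by
      intro p
      rw [integral_map measurable_fst.aemeasurable]
      exact (hgm.comp (measurable_const.prodMk measurable_id)).aestronglyMeasurable
    have : (∫ p : Ω × Ω, (∫ z : X × Bool,
          (if ev p.1 z.1 ≠ ev p.2 z.1 then (1:ℝ) else 0) ∂PT) ∂(Q.prod Q'))
        = ∫ p : Ω × Ω, (∫ x, (if ev p.1 x ≠ ev p.2 x then (1:ℝ) else 0)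
            ∂(PT.map Prod.fst)) ∂(Q.prod Q') := by
      exact integral_congr_ae (ae_of_all _ hmap)
    rw [this]
    have iprod : Integrable (fun p : Ω × Ω =>
        ∫ x, (if ev p.1 x ≠ ev p.2 x then (1:ℝ) else 0) ∂(PT.map Prod.fst))
        (Q.prod Q') := by
      refine integrable_of_bdd_one _ ?_ fun p =>
        norm_integral_le_of_norm_le_const (ae_of_all _ fun x => ite_norm_le) |>.trans
          (by simp)
      exact (hgm.stronglyMeasurable.integral_prod_right').aestronglyMeasurable
    rw [MeasureTheory.integral_prod _ iprod]
  -- nonnegativity of the remaining terms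
  have hS : (0:ℝ) ≤ ∫ z, ∫ h, (if ev h z.1 ≠ z.2 then (1:ℝ) else 0) ∂Q ∂PS :=
    integral_nonneg fun z => integral_nonneg fun h => by positivity
  have heS : (0:ℝ) ≤ ∫ h, ∫ h', ∫ x, (if ev h x ≠ ev h' x then (1:ℝ) else 0)
      ∂(PS.map Prod.fst) ∂Q' ∂Q :=
    integral_nonneg fun h => integral_nonneg fun h' => integral_nonneg fun x => by positivity
  have habs : (0:ℝ) ≤ |(∫ x, ∫ h, ∫ h', (if ev h x ≠ ev h' x then (1 : ℝ) else 0) ∂Q ∂Q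
              ∂(PS.map Prod.fst))
           - ∫ x, ∫ h, ∫ h', (if ev h x ≠ ev h' x then (1 : ℝ) else 0) ∂Q ∂Q
              ∂(PT.map Prod.fst)| := abs_nonneg _
  rw [swap] at step
  linarith
end
end
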